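/- arXiv:1606.02369 — 6 statements merged into one kernel-verified Lean document; each statement's English description precedes it below -/
import Mathlib

section
/- Let m ≥ 2 and r ≥ 1, let (W,∇) be a formal connection with pole order m on a free ℂ[[z]]-module W of rank r, and let π : W ⊗_{ℂ[[z]]} ℂ[[w]] → ℂ[[w]] be a surjective ℂ[[w]]-linear map such that π∘D = ∇_{ν̃}∘π for some ν̃ ∈ ℂ[[w]]. If the coefficient of w^1 in ν̃ is nonzero, then the ℂ[[z]]-linear map W → ℂ[[w]], a ↦ π(a⊗1), is bijective. -/
open PowerSeries TensorProduct

noncomputable section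

/-- A formal connection with pole order `m` on a `ℂ[[z]]`-module `W`, written in the
trivializing frame `dz/z^m`: an additive map `Dc : W → W` satisfying
`Dc(f • a) = (z^m * f') • a + f • Dc a`. -/
def IsFormalConnection (m : ℕ) {W : Type*} [AddCommGroup W] [Module (PowerSeries ℂ) W]
    (Dc : W →+ W) : Prop :=
  ∀ (f : PowerSeries ℂ) (a : W),
    Dc (f • a) = ((X : PowerSeries ℂ) ^ m * PowerSeries.derivative ℂ f) • a + f • Dc a

/-- The ring `ℂ[[w]]`, regarded as a `ℂ[[z]]`-algebra via `z = w^r`. -/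
def Cw (_r : ℕ) : Type := PowerSeries ℂ

instance (r : ℕ) : CommRing (Cw r) := inferInstanceAs (CommRing (PowerSeries ℂ))

/-- The substitution ring homomorphism `ℂ[[z]] → ℂ[[w]]`, `f(z) ↦ f(w^r)`. -/
noncomputable def substPow (r : ℕ) : PowerSeries ℂ →+* Cw r :=
  if h : 0 < r then
    (HahnSeries.toPowerSeries.toRingHom.comp
      ((HahnSeries.embDomainRingHom (AddMonoidHom.mulLeft r)
          (fun a b hab => Nat.eq_of_mul_eq_mul_left h (by simpa using hab))
          (fun a b => by
            simp only [AddMonoidHom.coe_mulLeft]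
            exact ⟨fun hh => Nat.le_of_mul_le_mul_left hh h,
              fun hh => Nat.mul_le_mul_left _ hh⟩)).comp
        HahnSeries.toPowerSeries.symm.toRingHom))
  else (PowerSeries.C (R := ℂ)).comp (PowerSeries.constantCoeff (R := ℂ))

noncomputable instance (r : ℕ) : Algebra (PowerSeries ℂ) (Cw r) := (substPow r).toAlgebra

/-- The element `w ∈ ℂ[[w]]`. -/
def Cw.w (r : ℕ) : Cw r := (PowerSeries.X : PowerSeries ℂ)

/-- The formal derivative `d/dw` on `ℂ[[w]]`. -/
noncomputable def Cw.deriv {r : ℕ} (f : Cw r) : Cw r :=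
  (PowerSeries.derivative ℂ (show PowerSeries ℂ from f) : PowerSeries ℂ)

/-- The coefficient of `w^n` in an element of `ℂ[[w]]`. -/
noncomputable def Cw.coeff {r : ℕ} (n : ℕ) (f : Cw r) : ℂ :=
  PowerSeries.coeff (R := ℂ) n (show PowerSeries ℂ from f)

/-!
The restriction `φ : a ↦ π (1 ⊗ a)` is `ℂ⟦z⟧`-linear, and its image `M` is stable under
`f ↦ w^N f' + ν f`, because `π` intertwines `D` with `∇_ν` and `D (1 ⊗ a) = r • (1 ⊗ ∇ a)`.
Surjectivity of `π` puts an element of `w`-adic valuation `0` into `M`. Applying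
`f ↦ w^N f' + (ν - ν(0)) f` to an element of valuation `j` gives one of valuation exactly `j + 1`:
the leading coefficient gets multiplied by the `w`-coefficient of `ν`, and `N ≥ 3` as soon as
`r ≥ 2`. Hence `M` contains elements of every valuation `0, …, r - 1`, so
`M + z • ℂ⟦w⟧ = ℂ⟦w⟧` (as `z = w^r`), and Nakayama's lemma gives `M = ℂ⟦w⟧`. Finally `ℂ⟦w⟧` is
free over `ℂ⟦z⟧` with basis `1, w, …, w^(r-1)`, so `φ` is a surjection between free modules of
the same finite rank, hence injective.
-/

namespace PowerSeries

variable {R : Type*} [CommRing R]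

lemma derivative_X_pow_succ_mul (j : ℕ) (u : R⟦X⟧) :
    d⁄dX R (X ^ (j + 1) * u) = X ^ (j + 1) * d⁄dX R u + (j + 1 : R⟦X⟧) * X ^ j * u := by
  rw [Derivation.leibniz, Derivation.leibniz_pow, derivative_X, smul_eq_mul, smul_eq_mul,
    nsmul_eq_mul, Nat.add_sub_cancel]
  push_cast
  ring

lemma exists_X_pow_mul_derivative_add_eq_X_pow_succ_mul [NoZeroDivisors R] {N : ℕ} (hN : 3 ≤ N)
    (j : ℕ) {ν u : R⟦X⟧} (hν : coeff 1 ν ≠ 0) (hu : coeff 0 u ≠ 0) :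
    ∃ v, coeff 0 v ≠ 0 ∧
      X ^ N * d⁄dX R (X ^ j * u) + (ν - C (coeff 0 ν)) * (X ^ j * u) = X ^ (j + 1) * v := by
  obtain ⟨μ, hμ⟩ : X ∣ ν - C (coeff 0 ν) := X_dvd_iff.mpr (by simp)
  have hμ0 : constantCoeff μ = coeff 1 ν := by
    have h := congrArg (coeff 1) hμ
    rw [map_sub, coeff_C, if_neg one_ne_zero, sub_zero, coeff_succ_X_mul] at h
    rw [h, coeff_zero_eq_constantCoeff_apply]
  obtain ⟨K, rfl⟩ : ∃ K, N = K + 3 := ⟨N - 3, by omega⟩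
  refine ⟨X ^ (K + 2) * d⁄dX R u + (j : R⟦X⟧) * X ^ (K + 1) * u + μ * u, ?_, ?_⟩
  · simpa [hμ0] using mul_ne_zero hν hu
  · rw [hμ]
    cases j with
    | zero => simp only [pow_zero, one_mul, zero_add, Nat.cast_zero, zero_mul, add_zero]; ring
    | succ i => rw [derivative_X_pow_succ_mul]; push_cast; ring

end PowerSeries

lemma TensorProduct.exists_apply_one_tmul_notMem {R A W : Type*} [CommRing R] [CommRing A]
    [Algebra R A] [AddCommGroup W] [Module R W] (π : A ⊗[R] W →ₗ[A] A)
    (hπ : Function.Surjective π) {I : Ideal A} (hI : I ≠ ⊤) : ∃ a : W, π (1 ⊗ₜ a) ∉ I := by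
  by_contra! h
  have hmem (x : A ⊗[R] W) : π x ∈ I := by
    induction x using TensorProduct.induction_on with
    | zero => simp
    | tmul g a =>
      rw [← mul_one g, ← smul_eq_mul, ← smul_tmul', map_smul]
      exact I.smul_mem g (h a)
    | add x y hx hy => simpa using I.add_mem hx hy
  obtain ⟨x, hx⟩ := hπ 1
  exact hI ((Ideal.eq_top_iff_one I).mpr (hx ▸ hmem x))

namespace Cw

variable {r : ℕ}

/-- `Cw r` is `ℂ⟦X⟧` by definition; naming the identification lets the `map_*` lemmas move
computations in `Cw r` into `ℂ⟦X⟧`. -/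
def toPowerSeries (r : ℕ) : Cw r ≃+* PowerSeries ℂ := RingEquiv.refl _

lemma coeff_def (n : ℕ) (f : Cw r) : Cw.coeff n f = PowerSeries.coeff n (toPowerSeries r f) := rfl

lemma ext {f g : Cw r} (h : ∀ n, Cw.coeff n f = Cw.coeff n g) : f = g := PowerSeries.ext h

@[simp] lemma toPowerSeries_w : toPowerSeries r (Cw.w r) = PowerSeries.X := rfl

@[simp] lemma toPowerSeries_deriv (f : Cw r) :
    toPowerSeries r (Cw.deriv f) = d⁄dX ℂ (toPowerSeries r f) := rfl

@[simp] lemma deriv_one : Cw.deriv (1 : Cw r) = 0 :=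
  (toPowerSeries r).injective (by simp)

lemma smul_def (f : PowerSeries ℂ) (g : Cw r) : f • g = substPow r f * g :=
  Algebra.smul_def f g

lemma coeff_substPow (hr : 0 < r) (f : PowerSeries ℂ) (n : ℕ) :
    Cw.coeff n (substPow r f) = if r ∣ n then PowerSeries.coeff (n / r) f else 0 := by
  simp only [substPow, hr, ↓reduceDIte, RingHom.comp_apply]
  refine HahnSeries.coeff_toPowerSeries.trans ?_
  split_ifs with h
  · obtain ⟨k, rfl⟩ := h
    rw [Nat.mul_div_cancel_left k hr]
    exact HahnSeries.embDomain_coeff (a := k)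
  · refine HahnSeries.embDomain_of_notMem_range ?_
    rintro ⟨k, hk⟩
    exact h ⟨k, hk.symm⟩

lemma toPowerSeries_substPow_C (hr : 0 < r) (c : ℂ) :
    toPowerSeries r (substPow r (PowerSeries.C c)) = PowerSeries.C c := by
  ext n
  rw [← coeff_def, coeff_substPow hr]
  rcases Nat.eq_zero_or_pos n with rfl | hn
  · simp
  · have hdiv : r ∣ n → n / r ≠ 0 := fun h => (Nat.div_pos (Nat.le_of_dvd hn h) hr).ne'
    simp only [PowerSeries.coeff_C, hn.ne', if_false]
    split_ifs <;> simp_all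

lemma substPow_X (hr : 0 < r) : substPow r PowerSeries.X = Cw.w r ^ r := by
  apply (toPowerSeries r).injective
  ext n
  rw [← coeff_def, coeff_substPow hr, map_pow, toPowerSeries_w, PowerSeries.coeff_X_pow]
  split_ifs with h1 h2 h2
  · obtain ⟨k, rfl⟩ := h1
    rw [PowerSeries.coeff_X, if_pos]
    simpa [hr.ne'] using h2
  · obtain ⟨k, rfl⟩ := h1
    rw [PowerSeries.coeff_X, Nat.mul_div_cancel_left k hr, if_neg]
    rintro rfl
    exact h2 (mul_one r)
  · exact absurd (h2 ▸ dvd_refl r) h1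
  · rfl

lemma coeff_smul_w_pow (hr : 0 < r) (f : PowerSeries ℂ) (j n : ℕ) :
    Cw.coeff n (f • Cw.w r ^ j) =
      if j ≤ n ∧ r ∣ n - j then PowerSeries.coeff ((n - j) / r) f else 0 := by
  rw [smul_def, coeff_def, map_mul, map_pow, toPowerSeries_w, PowerSeries.coeff_mul_X_pow']
  by_cases hj : j ≤ n
  · rw [if_pos hj, ← coeff_def, coeff_substPow hr]
    simp [hj]
  · simp [hj]

lemma coeff_sum_smul_w_pow (hr : 0 < r) (g : Fin r → PowerSeries ℂ) (n : ℕ) :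
    Cw.coeff n (∑ j, g j • Cw.w r ^ (j : ℕ)) =
      PowerSeries.coeff (n / r) (g ⟨n % r, Nat.mod_lt n hr⟩) := by
  rw [coeff_def, map_sum, map_sum, Finset.sum_eq_single ⟨n % r, Nat.mod_lt n hr⟩]
  · have hsub : n - n % r = r * (n / r) := by have := Nat.div_add_mod n r; omega
    rw [← coeff_def, coeff_smul_w_pow hr, if_pos ⟨Nat.mod_le n r, hsub ▸ dvd_mul_right r _⟩]
    simp only [hsub, Nat.mul_div_cancel_left _ hr]
  · intro j _ hj
    rw [← coeff_def, coeff_smul_w_pow hr, if_neg]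
    rintro ⟨hjn, hdvd⟩
    refine hj (Fin.ext ?_)
    rw [← Nat.mod_eq_of_lt j.isLt]
    exact (Nat.modEq_iff_dvd' hjn).mpr hdvd
  · simp

lemma linearCombination_w_pow_bijective (hr : 0 < r) :
    Function.Bijective
      (Fintype.linearCombination (PowerSeries ℂ) fun j : Fin r => Cw.w r ^ (j : ℕ)) := by
  have hmod (j : Fin r) (k : ℕ) : (r * k + j) % r = j := by
    rw [Nat.mul_add_mod, Nat.mod_eq_of_lt j.isLt]
  have hdiv (j : Fin r) (k : ℕ) : (r * k + j) / r = k := by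
    rw [Nat.mul_add_div hr, Nat.div_eq_of_lt j.isLt, add_zero]
  refine ⟨fun g g' h => funext fun j => PowerSeries.ext fun k => ?_, fun f => ?_⟩
  · have := congrArg (Cw.coeff (r * k + j)) h
    simp only [Fintype.linearCombination_apply, coeff_sum_smul_w_pow hr, hdiv] at this
    simpa only [hmod] using this
  · refine ⟨fun j => PowerSeries.mk fun k => Cw.coeff (r * k + j) f, ext fun n => ?_⟩
    rw [Fintype.linearCombination_apply, coeff_sum_smul_w_pow hr, PowerSeries.coeff_mk,
      Nat.div_add_mod]

def powBasis (hr : 0 < r) : Module.Basis (Fin r) (PowerSeries ℂ) (Cw r) :=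
  .ofEquivFun (LinearEquiv.ofBijective _ (linearCombination_w_pow_bijective hr)).symm

lemma injective_of_surjective_of_finrank_eq (hr : 0 < r) {W : Type*} [AddCommGroup W]
    [Module (PowerSeries ℂ) W] [Module.Finite (PowerSeries ℂ) W] [Module.Free (PowerSeries ℂ) W]
    (hrank : Module.finrank (PowerSeries ℂ) W = r) (φ : W →ₗ[PowerSeries ℂ] Cw r)
    (hφ : Function.Surjective φ) : Function.Injective φ := by
  have := Module.Free.of_basis (powBasis hr)
  have := Module.Finite.of_basis (powBasis hr)
  let e := LinearEquiv.ofFinrankEq W (Cw r)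
    (by rw [hrank, Module.finrank_eq_card_basis (powBasis hr), Fintype.card_fin])
  exact OrzechProperty.injective_of_surjective_of_injective e.toLinearMap φ e.injective hφ

lemma exists_w_pow_mul_mem {N : ℕ} (hN : r < N) {ν : Cw r} (hν : Cw.coeff 1 ν ≠ 0)
    {M : Submodule (PowerSeries ℂ) (Cw r)}
    (hM : ∀ f ∈ M, Cw.w r ^ N * Cw.deriv f + ν * f ∈ M) (h0 : ∃ f ∈ M, Cw.coeff 0 f ≠ 0) :
    ∀ j < r, ∃ u : Cw r, Cw.coeff 0 u ≠ 0 ∧ Cw.w r ^ j * u ∈ M := by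
  intro j
  induction j with
  | zero =>
    obtain ⟨f, hf, hf0⟩ := h0
    exact fun _ => ⟨f, hf0, by rwa [pow_zero, one_mul]⟩
  | succ j ih =>
    intro hj
    obtain ⟨u, hu, hmem⟩ := ih (by omega)
    have hr : 0 < r := by omega
    rw [coeff_def] at hν hu
    obtain ⟨v, hv, heq⟩ :=
      PowerSeries.exists_X_pow_mul_derivative_add_eq_X_pow_succ_mul (N := N) (by omega) j hν hu
    refine ⟨(toPowerSeries r).symm v, hv, ?_⟩
    convert M.sub_mem (hM _ hmem) (M.smul_mem (PowerSeries.C (Cw.coeff 0 ν)) hmem) using 1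
    apply (toPowerSeries r).injective
    simp only [smul_def, map_sub, map_add, map_mul, map_pow, toPowerSeries_w, toPowerSeries_deriv,
      toPowerSeries_substPow_C hr, RingEquiv.apply_symm_apply, coeff_def]
    rw [← heq]
    ring

lemma eq_top_of_forall_w_pow_mul_mem (hr : 0 < r) {M : Submodule (PowerSeries ℂ) (Cw r)}
    (hM : ∀ j < r, ∃ u : Cw r, Cw.coeff 0 u ≠ 0 ∧ Cw.w r ^ j * u ∈ M) : M = ⊤ := by
  have := Module.Finite.of_basis (powBasis hr)
  have hX : PowerSeries.X ∈ IsLocalRing.maximalIdeal (PowerSeries ℂ) := by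
    rw [PowerSeries.maximalIdeal_eq_span_X]
    exact Ideal.subset_span rfl
  have key : ∀ i ≤ r, ∀ g : Cw r,
      Cw.w r ^ (r - i) * g ∈ M ⊔ IsLocalRing.maximalIdeal (PowerSeries ℂ) • ⊤ := by
    intro i
    induction i with
    | zero =>
      intro _ g
      rw [Nat.sub_zero, ← substPow_X hr, ← smul_def]
      exact Submodule.mem_sup_right (Submodule.smul_mem_smul hX trivial)
    | succ i ih =>
      intro hi g
      obtain ⟨u, hu, hmem⟩ := hM (r - (i + 1)) (by omega)
      set c := Cw.coeff 0 g / Cw.coeff 0 u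
      obtain ⟨g', hg'⟩ : PowerSeries.X ∣ toPowerSeries r g - PowerSeries.C c * toPowerSeries r u :=
        PowerSeries.X_dvd_iff.mpr (by
          simp only [c, map_sub, map_mul, ← PowerSeries.coeff_zero_eq_constantCoeff_apply,
            PowerSeries.coeff_zero_C, ← coeff_def, div_mul_cancel₀ _ hu, sub_self])
      have hsplit : Cw.w r ^ (r - (i + 1)) * g =
          PowerSeries.C c • (Cw.w r ^ (r - (i + 1)) * u) +
            Cw.w r ^ (r - i) * (toPowerSeries r).symm g' := by
        apply (toPowerSeries r).injective
        simp only [smul_def, map_add, map_mul, map_pow, toPowerSeries_w,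
          toPowerSeries_substPow_C hr, RingEquiv.apply_symm_apply]
        rw [show r - i = r - (i + 1) + 1 by omega]
        linear_combination (PowerSeries.X ^ (r - (i + 1))) * hg'
      rw [hsplit]
      exact Submodule.add_mem _ (Submodule.mem_sup_left (M.smul_mem _ hmem)) (ih (by omega) _)
  refine top_le_iff.mp (Submodule.le_of_le_smul_of_le_jacobson_bot Module.Finite.fg_top
    (IsLocalRing.maximalIdeal_le_jacobson _) fun g _ => ?_)
  simpa using key r le_rfl g

end Cw

theorem statement1_general (m r : ℕ) (hm : 2 ≤ m) (hr : 1 ≤ r)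
    (W : Type*) [AddCommGroup W] [Module (PowerSeries ℂ) W]
    [Module.Finite (PowerSeries ℂ) W] [Module.Free (PowerSeries ℂ) W]
    (hrank : Module.finrank (PowerSeries ℂ) W = r)
    (Dc : W →+ W)
    (D : Cw r ⊗[PowerSeries ℂ] W →+ Cw r ⊗[PowerSeries ℂ] W)
    (hD : ∀ (g : Cw r) (a : W),
      D (g ⊗ₜ a) = r • ((g ⊗ₜ[PowerSeries ℂ] Dc a))
        + (Cw.w r ^ (m * r - r + 1) * Cw.deriv g) ⊗ₜ a)
    (π : Cw r ⊗[PowerSeries ℂ] W →ₗ[Cw r] Cw r) (hπ : Function.Surjective π)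
    (ν : Cw r)
    (hcompat : ∀ x, π (D x) =
      Cw.w r ^ (m * r - r + 1) * Cw.deriv (π x) + ν * π x)
    (hν : Cw.coeff 1 ν ≠ 0) :
    Function.Bijective (fun a : W => π ((1 : Cw r) ⊗ₜ a)) := by
  let φ := TensorProduct.AlgebraTensorModule.curry π 1
  have hstable : ∀ f ∈ LinearMap.range φ,
      Cw.w r ^ (m * r - r + 1) * Cw.deriv f + ν * f ∈ LinearMap.range φ := by
    rintro _ ⟨a, rfl⟩
    refine ⟨r • Dc a, ?_⟩
    calc φ (r • Dc a) = π (r • (1 ⊗ₜ Dc a)) := by rw [map_nsmul, map_nsmul]; rfl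
      _ = π (D (1 ⊗ₜ a)) := by simp [hD]
      _ = _ := hcompat _
  obtain ⟨a, ha⟩ := TensorProduct.exists_apply_one_tmul_notMem π hπ
    (RingHom.ker_ne_top (PowerSeries.constantCoeff.comp (Cw.toPowerSeries r).toRingHom))
  have hsurj : Function.Surjective φ := by
    refine LinearMap.range_eq_top.mp (Cw.eq_top_of_forall_w_pow_mul_mem hr ?_)
    refine Cw.exists_w_pow_mul_mem (N := m * r - r + 1) ?_ hν hstable ⟨φ a, ⟨a, rfl⟩, ?_⟩
    · have := Nat.mul_le_mul_right r hm
      omega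
    · simpa [Cw.coeff_def, φ] using ha
  exact ⟨Cw.injective_of_surjective_of_finrank_eq hr hrank φ hsurj, hsurj⟩

/-- Let `m ≥ 2`, `r ≥ 1`, `(W,∇)` a formal connection with pole order `m` on
a free `ℂ[[z]]`-module of rank `r`, and `π : W ⊗ ℂ[[w]] → ℂ[[w]]` a surjective `ℂ[[w]]`-linear
map intertwining the induced connection `D` with `∇_ν̃ = d + ν̃ ω` (in the frame
`ω = dw/w^N`, `N = mr - r + 1`).  If the coefficient of `w^1` in `ν̃` is nonzero, then the
restriction `W → ℂ[[w]]`, `a ↦ π(a ⊗ 1)`, is bijective. -/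
theorem statement1 (m r : ℕ) (hm : 2 ≤ m) (hr : 1 ≤ r)
    (W : Type*) [AddCommGroup W] [Module (PowerSeries ℂ) W]
    [Module.Finite (PowerSeries ℂ) W] [Module.Free (PowerSeries ℂ) W]
    (hrank : Module.finrank (PowerSeries ℂ) W = r)
    (Dc : W →+ W) (hDc : IsFormalConnection m Dc)
    (D : Cw r ⊗[PowerSeries ℂ] W →+ Cw r ⊗[PowerSeries ℂ] W)
    (hD : ∀ (g : Cw r) (a : W),
      D (g ⊗ₜ a) = r • ((g ⊗ₜ[PowerSeries ℂ] Dc a))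
        + (Cw.w r ^ (m * r - r + 1) * Cw.deriv g) ⊗ₜ a)
    (π : Cw r ⊗[PowerSeries ℂ] W →ₗ[Cw r] Cw r) (hπ : Function.Surjective π)
    (ν : Cw r)
    (hcompat : ∀ x, π (D x) =
      Cw.w r ^ (m * r - r + 1) * Cw.deriv (π x) + ν * π x)
    (hν : Cw.coeff 1 ν ≠ 0) :
    Function.Bijective (fun a : W => π ((1 : Cw r) ⊗ₜ a)) :=
  statement1_general m r hm hr W hrank Dc D hD π hπ ν hcompat hν

end
end

section
/- Let V be a free A-module of rank r, let ∇̄ : V → V be an A-linear map, and let ϖ_0 : V ⊗_A B → B be a surjective B-linear map such that r·ϖ_0((∇̄⊗id_B)(x)) = μ̂_0·ϖ_0(x) for all x ∈ V ⊗_A B, where μ̂_0 ∈ B is an element whose coefficient of w^1 is nonzero. Then every A-submodule U ⊆ V with ∇̄(U) ⊆ U and such that the quotient V/U is a free A-module satisfies U = 0 or U = V. -/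
open Polynomial TensorProduct

noncomputable section

/-- The ring `A = ℂ[z]/(z^m)`. -/
def Amod (m : ℕ) : Type :=
  Polynomial ℂ ⧸ Ideal.span {(Polynomial.X : Polynomial ℂ) ^ m}

instance (m : ℕ) : CommRing (Amod m) :=
  inferInstanceAs (CommRing (Polynomial ℂ ⧸ Ideal.span {(Polynomial.X : Polynomial ℂ) ^ m}))

instance (m : ℕ) : Algebra ℂ (Amod m) :=
  inferInstanceAs (Algebra ℂ (Polynomial ℂ ⧸ Ideal.span {(Polynomial.X : Polynomial ℂ) ^ m}))

/-- The ring `B = ℂ[w]/(w^N)` with `N = m*r - r + 1`. -/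
def Bmod (m r : ℕ) : Type :=
  Polynomial ℂ ⧸ Ideal.span {(Polynomial.X : Polynomial ℂ) ^ (m * r - r + 1)}

instance (m r : ℕ) : CommRing (Bmod m r) :=
  inferInstanceAs
    (CommRing (Polynomial ℂ ⧸ Ideal.span {(Polynomial.X : Polynomial ℂ) ^ (m * r - r + 1)}))

instance (m r : ℕ) : Algebra ℂ (Bmod m r) :=
  inferInstanceAs
    (Algebra ℂ (Polynomial ℂ ⧸ Ideal.span {(Polynomial.X : Polynomial ℂ) ^ (m * r - r + 1)}))

/-- The class of a polynomial in `A = ℂ[z]/(z^m)`. -/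
def Amod.mk (m : ℕ) (p : Polynomial ℂ) : Amod m :=
  (Ideal.Quotient.mk (Ideal.span {(Polynomial.X : Polynomial ℂ) ^ m}) p : _)

/-- The class of a polynomial in `B = ℂ[w]/(w^N)`. -/
def Bmod.mk (m r : ℕ) (p : Polynomial ℂ) : Bmod m r :=
  (Ideal.Quotient.mk (Ideal.span {(Polynomial.X : Polynomial ℂ) ^ (m * r - r + 1)}) p : _)

/-- The element `z ∈ A`. -/
def Amod.z (m : ℕ) : Amod m := Amod.mk m Polynomial.X

/-- The element `w ∈ B`. -/
def Bmod.w (m r : ℕ) : Bmod m r := Bmod.mk m r Polynomial.X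

/-- The coefficient of `w^j` in the unique polynomial representative of degree `< N` of an
element of `B = ℂ[w]/(w^N)` (for `j < N`). -/
noncomputable def Bmod.coeff (m r : ℕ) (j : ℕ) (b : Bmod m r) : ℂ :=
  ((Quotient.out
      (show Polynomial ℂ ⧸ Ideal.span {(Polynomial.X : Polynomial ℂ) ^ (m * r - r + 1)} from b))
      %ₘ (Polynomial.X ^ (m * r - r + 1))).coeff j

/-- The canonical map `ℂ[z]/(z^m) → ℂ[w]/(w^N)`, `z ↦ w^r` (raw version). -/
noncomputable def AtoB0 (m r : ℕ) [NeZero m] :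
    (Polynomial ℂ ⧸ Ideal.span {(Polynomial.X : Polynomial ℂ) ^ m}) →+*
      (Polynomial ℂ ⧸ Ideal.span {(Polynomial.X : Polynomial ℂ) ^ (m * r - r + 1)}) :=
  Ideal.Quotient.lift (Ideal.span {(Polynomial.X : Polynomial ℂ) ^ m})
    ((Ideal.Quotient.mk (Ideal.span {(Polynomial.X : Polynomial ℂ) ^ (m * r - r + 1)})).comp
      (if 1 ≤ r then (Polynomial.aeval ((Polynomial.X : Polynomial ℂ) ^ r)).toRingHom
       else (Polynomial.aeval (0 : Polynomial ℂ)).toRingHom))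
    (by
      intro a ha
      rw [Ideal.mem_span_singleton] at ha
      obtain ⟨c, rfl⟩ := ha
      rw [map_mul]
      apply mul_eq_zero_of_left
      have hm : 1 ≤ m := Nat.one_le_iff_ne_zero.mpr (NeZero.ne m)
      by_cases h : 1 ≤ r
      · rw [if_pos h, map_pow, RingHom.comp_apply, AlgHom.toRingHom_eq_coe, RingHom.coe_coe,
          Polynomial.aeval_X, ← map_pow, ← pow_mul, Ideal.Quotient.eq_zero_iff_mem,
          Ideal.mem_span_singleton]
        have h1 : r ≤ r * m := Nat.le_mul_of_pos_right r (by omega)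
        have h2 : m * r = r * m := Nat.mul_comm m r
        exact pow_dvd_pow _ (by omega)
      · rw [if_neg h, map_pow, RingHom.comp_apply, AlgHom.toRingHom_eq_coe, RingHom.coe_coe,
          Polynomial.aeval_X, map_zero, zero_pow (NeZero.ne m)])

/-- The canonical map `A → B`, `z ↦ w^r`. -/
noncomputable def AtoB (m r : ℕ) [NeZero m] : Amod m →+* Bmod m r := AtoB0 m r

noncomputable instance (m r : ℕ) [NeZero m] : Algebra (Amod m) (Bmod m r) :=
  (AtoB m r).toAlgebra

/-!
Suppose `0 ≠ U ≠ V`. As `V ⧸ U` is free, `U` is a direct summand of `V`, hence free over the local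
ring `A`, and the ranks `d₁` of `U` and `d₂` of `V ⧸ U` are positive with `d₁ + d₂ = r`. By
Cayley–Hamilton on `U` and on `V ⧸ U`, the product `χ₁ χ₂` of the two characteristic polynomials
annihilates `∇̄`. The compatibility says that `ϖ₀` turns `∇̄ ⊗ id_B` into multiplication by
`λ = μ̂₀ / r`, so applying `ϖ₀` to a preimage of `1` gives `χ₁(λ) χ₂(λ) = 0` in `B`.
But `λ = c + w · unit`, and each `χᵢ(λ)` is `w^eᵢ · unit` with `eᵢ ≤ dᵢ`, so the product is
`w^(e₁ + e₂) · unit` with `e₁ + e₂ ≤ r < N` (as `m ≥ 2`), which is nonzero.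
-/

section TruncatedPolynomial

variable {K : Type*} [Field K] {n : ℕ}

local notation "π" => Ideal.Quotient.mk (Ideal.span {(X : K[X]) ^ n})

theorem isNilpotent_quotientMk_span_X_pow {p : K[X]} (hp : X ∣ p) : IsNilpotent (π p) :=
  ⟨n, by
    rw [← map_pow, Ideal.Quotient.eq_zero_iff_mem, Ideal.mem_span_singleton]
    exact pow_dvd_pow_of_dvd hp n⟩

theorem isUnit_quotientMk_span_X_pow {p : K[X]} (hp : p.coeff 0 ≠ 0) : IsUnit (π p) := by
  rw [← add_sub_cancel (C (p.coeff 0)) p, map_add]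
  exact (isNilpotent_quotientMk_span_X_pow (X_dvd_iff.2 (by simp))).isUnit_add_left_of_commute
    ((isUnit_C.2 hp.isUnit).map _) (Commute.all _ _)

theorem isLocalRing_quotient_span_X_pow (hn : n ≠ 0) :
    IsLocalRing (K[X] ⧸ Ideal.span {(X : K[X]) ^ n}) :=
  have : Nontrivial (K[X] ⧸ Ideal.span {(X : K[X]) ^ n}) :=
    Ideal.Quotient.nontrivial_iff.2 fun h =>
      not_isUnit_X ((isUnit_pow_iff hn).1 (Ideal.span_singleton_eq_top.1 h))
  .of_isUnit_or_isUnit_one_sub_self fun a => by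
    obtain ⟨p, rfl⟩ := Ideal.Quotient.mk_surjective a
    by_cases hp : p.coeff 0 = 0
    · right
      rw [← map_one π, ← map_sub]
      exact isUnit_quotientMk_span_X_pow (by simp [hp])
    · exact .inl (isUnit_quotientMk_span_X_pow hp)

theorem quotientMk_X_pow_ne_zero {k : ℕ} (hk : k < n) : π X ^ k ≠ 0 := by
  rw [← map_pow, Ne, Ideal.Quotient.eq_zero_iff_mem, Ideal.mem_span_singleton, X_pow_dvd_iff]
  exact fun h => by simpa using h k hk

theorem exists_quotientMk_sub_algebraMap_eq_X_mul {p : K[X]} (hp : p.coeff 1 ≠ 0) :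
    ∃ u, IsUnit u ∧ π p - algebraMap K _ (p.coeff 0) = π X * u := by
  obtain ⟨q, hq⟩ : X ∣ p - C (p.coeff 0) := X_dvd_iff.2 (by simp)
  refine ⟨π q, isUnit_quotientMk_span_X_pow ?_, ?_⟩
  · have hq1 : q.coeff 0 = p.coeff 1 := by
      simpa [coeff_X_mul] using (congrArg (coeff · 1) hq).symm
    rwa [hq1]
  · rw [← map_mul, ← hq, map_sub]
    rfl

end TruncatedPolynomial

theorem Polynomial.exists_aeval_eq_sub_pow_mul_isUnit {K S : Type*} [Field K] [CommRing S]
    [Algebra K S] {P : K[X]} (hP : P ≠ 0) {s : S} {c : K} (hs : IsNilpotent (s - algebraMap K S c)) :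
    ∃ e ≤ P.natDegree, ∃ u, IsUnit u ∧ aeval s P = (s - algebraMap K S c) ^ e * u := by
  obtain ⟨Q, hPQ, hQ⟩ := P.exists_eq_pow_rootMultiplicity_mul_and_not_dvd hP c
  classical
  refine ⟨_, count_roots P ▸ (Multiset.count_le_card _ _).trans (card_roots' P), aeval s Q, ?_,
    by conv_lhs => rw [hPQ, map_mul, map_pow, map_sub, aeval_X, aeval_C]⟩
  obtain ⟨R, hR⟩ := X_sub_C_dvd_sub_C_eval (a := c) (p := Q)
  have hQs : aeval s Q = algebraMap K S (Q.eval c) + (s - algebraMap K S c) * aeval s R := by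
    have := congrArg (aeval s) hR
    simp only [map_sub, map_mul, aeval_X, aeval_C] at this
    linear_combination this
  rw [hQs]
  refine ((Commute.all _ _).isNilpotent_mul_right hs).isUnit_add_left_of_commute ?_ (Commute.all _ _)
  exact (Ne.isUnit fun h => hQ (dvd_iff_isRoot.2 h)).map _

section SplitSubmodule

variable {R M : Type*} [CommRing R] [AddCommGroup M] [Module R M] (U : Submodule R M)
  [Module.Projective R (M ⧸ U)]

theorem Submodule.nonempty_linearEquiv_prod_quotient : Nonempty (M ≃ₗ[R] U × (M ⧸ U)) :=
  have ⟨l, hl⟩ := Module.projective_lifting_property U.mkQ LinearMap.id U.mkQ_surjective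
  ⟨((LinearMap.exact_subtype_mkQ U).splitSurjectiveEquiv U.injective_subtype ⟨l, hl⟩).1⟩

variable [Module.Finite R M]

theorem Submodule.finite_of_projective_quotient : Module.Finite R U :=
  have ⟨e⟩ := U.nonempty_linearEquiv_prod_quotient
  .of_surjective (LinearMap.fst R U (M ⧸ U) ∘ₗ e.toLinearMap)
    (Prod.fst_surjective.comp e.surjective)

theorem Submodule.free_of_projective_quotient [IsLocalRing R] [Module.Free R M] :
    Module.Free R U :=
  have ⟨e⟩ := U.nonempty_linearEquiv_prod_quotient
  have := Module.Projective.of_equiv e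
  have := Module.Projective.of_split (LinearMap.inl R U (M ⧸ U)) (LinearMap.fst R U (M ⧸ U))
    (LinearMap.fst_comp_inl R U (M ⧸ U))
  have := U.finite_of_projective_quotient
  Module.free_of_flat_of_isLocalRing

theorem Submodule.finrank_add_finrank_quotient_of_free [StrongRankCondition R] [Module.Free R U]
    [Module.Free R (M ⧸ U)] :
    Module.finrank R U + Module.finrank R (M ⧸ U) = Module.finrank R M :=
  have ⟨e⟩ := U.nonempty_linearEquiv_prod_quotient
  have := U.finite_of_projective_quotient
  (Module.finrank_prod (R := R) (M := U) (M' := M ⧸ U)).symm.trans e.finrank_eq.symm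

end SplitSubmodule

theorem Module.End.aeval_comp_eq_comp_aeval {R M N : Type*} [CommRing R] [AddCommGroup M]
    [Module R M] [AddCommGroup N] [Module R N] {g : M →ₗ[R] N} {D : Module.End R M}
    {D' : Module.End R N} (h : D' ∘ₗ g = g ∘ₗ D) (p : R[X]) :
    aeval D' p ∘ₗ g = g ∘ₗ aeval D p := by
  induction p using Polynomial.induction_on' with
  | add p q hp hq => simp only [map_add, LinearMap.add_comp, LinearMap.comp_add, hp, hq]
  | monomial n a =>
    simp only [aeval_monomial, Module.algebraMap_end_eq_smul_id, Module.End.mul_eq_comp,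
      LinearMap.smul_comp, LinearMap.comp_smul, LinearMap.id_comp,
      Module.End.commute_pow_left_of_commute h]

theorem LinearMap.apply_lTensor_aeval {R S M : Type*} [CommRing R] [CommRing S] [Algebra R S]
    [AddCommGroup M] [Module R M] (f : S ⊗[R] M →ₗ[S] S) {D : Module.End R M} {c : S}
    (h : ∀ x, f (D.lTensor S x) = c * f x) (p : R[X]) (x : S ⊗[R] M) :
    f ((aeval D p).lTensor S x) = aeval c p * f x := by
  have := LinearMap.congr_fun (Module.End.aeval_comp_eq_comp_aeval
    (g := f.restrictScalars R) (D := D.lTensor S) (D' := Algebra.lmul R S c)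
    (LinearMap.ext h).symm p) x
  have hD : aeval (D.lTensor S) p = (aeval D p).lTensor S :=
    aeval_algHom_apply (Module.End.lTensorAlgHom R M S) D p
  rw [LinearMap.comp_apply, LinearMap.comp_apply, hD, aeval_algHom_apply] at this
  exact this.symm

theorem LinearMap.aeval_charpoly_restrict_mul_charpoly_mapQ {R M : Type*} [CommRing R]
    [AddCommGroup M] [Module R M] (D : Module.End R M) {U : Submodule R M}
    (hU : ∀ x ∈ U, D x ∈ U) [Module.Free R U] [Module.Finite R U] [Module.Free R (M ⧸ U)]
    [Module.Finite R (M ⧸ U)] :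
    aeval D ((D.restrict hU).charpoly * (U.mapQ U D hU).charpoly) = 0 := by
  ext x
  rw [map_mul, Module.End.mul_apply]
  have hmem : aeval D (U.mapQ U D hU).charpoly x ∈ U := by
    have := LinearMap.congr_fun (Module.End.aeval_comp_eq_comp_aeval
      (Submodule.mapQ_mkQ U U D (h := hU)) (U.mapQ U D hU).charpoly) x
    rw [aeval_self_charpoly] at this
    simpa using this.symm
  have := LinearMap.congr_fun (Module.End.aeval_comp_eq_comp_aeval (g := U.subtype)
    (D := D.restrict hU) (D' := D) rfl (D.restrict hU).charpoly) ⟨_, hmem⟩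
  simpa [aeval_self_charpoly] using this

namespace Amod

instance (m : ℕ) [NeZero m] : IsLocalRing (Amod m) :=
  isLocalRing_quotient_span_X_pow (NeZero.ne m)

def evalZero (m : ℕ) [NeZero m] : Amod m →+* ℂ :=
  Ideal.Quotient.lift _ (evalRingHom 0) fun p hp => by
    obtain ⟨q, rfl⟩ := Ideal.mem_span_singleton'.1 hp
    simp [zero_pow (NeZero.ne m)]

variable {m r : ℕ} [NeZero m]

theorem evalZero_mk (p : ℂ[X]) : evalZero m (Amod.mk m p) = p.eval 0 :=
  rfl

theorem algebraMap_mk (hr : r ≠ 0) (p : ℂ[X]) :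
    algebraMap (Amod m) (Bmod m r) (Amod.mk m p) = Bmod.mk m r (aeval (X ^ r) p) := by
  change AtoB0 m r (Ideal.Quotient.mk _ p) = _
  rw [AtoB0, Ideal.Quotient.lift_mk, if_pos (Nat.one_le_iff_ne_zero.2 hr)]
  rfl

theorem quotientMk_comp_algebraMap (hr : r ≠ 0) :
    (Ideal.Quotient.mk (Ideal.span {Bmod.w m r ^ r})).comp (algebraMap (Amod m) (Bmod m r)) =
      ((Ideal.Quotient.mk _).comp (algebraMap ℂ (Bmod m r))).comp (evalZero m) := by
  refine Ideal.Quotient.ringHom_ext (Polynomial.ringHom_ext (fun a => ?_) ?_)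
  · change Ideal.Quotient.mk _ (algebraMap (Amod m) (Bmod m r) (Amod.mk m (C a))) =
      Ideal.Quotient.mk _ (algebraMap ℂ _ (evalZero m (Amod.mk m (C a))))
    rw [algebraMap_mk hr, aeval_C, evalZero_mk, eval_C]
    rfl
  · change Ideal.Quotient.mk _ (algebraMap (Amod m) (Bmod m r) (Amod.mk m X)) =
      Ideal.Quotient.mk _ (algebraMap ℂ _ (evalZero m (Amod.mk m X)))
    rw [algebraMap_mk hr, aeval_X]
    change Ideal.Quotient.mk _ (Bmod.w m r ^ r) = _
    rw [evalZero_mk, eval_X, map_zero, map_zero, Ideal.Quotient.eq_zero_iff_mem]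
    exact Ideal.mem_span_singleton_self _

end Amod

namespace Bmod

variable {m r : ℕ}

theorem coeff_mk {j : ℕ} (hj : j < m * r - r + 1) (p : ℂ[X]) :
    Bmod.coeff m r j (Bmod.mk m r p) = p.coeff j := by
  have hout : Quotient.out (Bmod.mk m r p) - p ∈ Ideal.span {(X : ℂ[X]) ^ (m * r - r + 1)} :=
    Ideal.Quotient.eq.1 (Ideal.Quotient.mk_out _)
  rw [Bmod.coeff, modByMonic_eq_of_dvd_sub (monic_X_pow _) (Ideal.mem_span_singleton.1 hout)]
  conv_rhs => rw [← modByMonic_add_div p (X ^ (m * r - r + 1))]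
  rw [coeff_add, (commute_X_pow _ _).eq, coeff_mul_X_pow', if_neg (by omega), add_zero]

theorem coeff_smul {j : ℕ} (hj : j < m * r - r + 1) (a : ℂ) (b : Bmod m r) :
    Bmod.coeff m r j (a • b) = a * Bmod.coeff m r j b := by
  obtain ⟨p, rfl⟩ : ∃ p, Bmod.mk m r p = b := Ideal.Quotient.mk_surjective b
  have hmk : a • Bmod.mk m r p = Bmod.mk m r (C a * p) :=
    (Algebra.smul_def a _).trans (map_mul (Ideal.Quotient.mk _) _ _).symm
  rw [hmk, coeff_mk hj, coeff_mk hj, coeff_C_mul]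

theorem isNilpotent_w : IsNilpotent (Bmod.w m r) :=
  isNilpotent_quotientMk_span_X_pow dvd_rfl

theorem w_pow_ne_zero {k : ℕ} (hk : k < m * r - r + 1) : Bmod.w m r ^ k ≠ 0 :=
  quotientMk_X_pow_ne_zero hk

theorem exists_sub_algebraMap_eq_w_mul (hN : 1 < m * r - r + 1) {b : Bmod m r}
    (hb : Bmod.coeff m r 1 b ≠ 0) :
    ∃ (c : ℂ) (u : Bmod m r), IsUnit u ∧ b - algebraMap ℂ (Bmod m r) c = Bmod.w m r * u := by
  obtain ⟨p, rfl⟩ := Ideal.Quotient.mk_surjective b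
  exact ⟨_, exists_quotientMk_sub_algebraMap_eq_X_mul ((coeff_mk hN p).symm.trans_ne hb)⟩

/-- Reducing `χ` modulo `z` gives `P ∈ ℂ[X]` with `χ(b) ≡ P(b)` modulo `w ^ r` (as `z ↦ w ^ r`),
and `P(b) = w ^ e · unit` with `e ≤ deg P < r`. -/
theorem exists_aeval_eq_w_pow_mul_isUnit [NeZero m] {χ : (Amod m)[X]}
    (hχ : χ.Monic) (hdeg : χ.natDegree < r) {b u : Bmod m r} {c : ℂ} (hu : IsUnit u)
    (hb : b - algebraMap ℂ (Bmod m r) c = Bmod.w m r * u) :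
    ∃ e ≤ χ.natDegree, ∃ v, IsUnit v ∧ aeval b χ = Bmod.w m r ^ e * v := by
  set P := χ.map (Amod.evalZero m)
  obtain ⟨e, he, v, hv, hPb⟩ := exists_aeval_eq_sub_pow_mul_isUnit (hχ.map _).ne_zero (s := b)
    (c := c) (by rw [hb]; exact (Commute.all _ _).isNilpotent_mul_right isNilpotent_w)
  rw [hχ.natDegree_map] at he
  have hmod : aeval b χ - aeval b P ∈ Ideal.span {Bmod.w m r ^ r} := by
    rw [← Ideal.Quotient.eq, aeval_def, aeval_def, hom_eval₂, hom_eval₂, eval₂_map,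
      Amod.quotientMk_comp_algebraMap (by omega)]
  obtain ⟨t, ht⟩ := Ideal.mem_span_singleton'.1 hmod
  have hw : Bmod.w m r ^ r = Bmod.w m r ^ e * Bmod.w m r ^ (r - e) := by
    rw [← pow_add, Nat.add_sub_cancel' (by omega)]
  refine ⟨e, he, u ^ e * v + Bmod.w m r ^ (r - e) * t, ?_, ?_⟩
  · exact ((Commute.all _ _).isNilpotent_mul_right (isNilpotent_w.pow_of_pos (by omega))
      ).isUnit_add_left_of_commute ((hu.pow e).mul hv) (Commute.all _ _)
  · rw [hb] at hPb
    linear_combination -ht + hPb + t * hw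

theorem aeval_mul_aeval_ne_zero [NeZero m] {χ₁ χ₂ : (Amod m)[X]} (hχ₁ : χ₁.Monic)
    (hχ₂ : χ₂.Monic) (hd₁ : χ₁.natDegree < r) (hd₂ : χ₂.natDegree < r)
    (hd : χ₁.natDegree + χ₂.natDegree < m * r - r + 1) {b u : Bmod m r} {c : ℂ} (hu : IsUnit u)
    (hb : b - algebraMap ℂ (Bmod m r) c = Bmod.w m r * u) :
    aeval b χ₁ * aeval b χ₂ ≠ 0 := by
  obtain ⟨e₁, he₁, v₁, hv₁, h₁⟩ := exists_aeval_eq_w_pow_mul_isUnit hχ₁ hd₁ hu hb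
  obtain ⟨e₂, he₂, v₂, hv₂, h₂⟩ := exists_aeval_eq_w_pow_mul_isUnit hχ₂ hd₂ hu hb
  rw [h₁, h₂, mul_mul_mul_comm, ← pow_add, (hv₁.mul hv₂).mul_left_eq_zero.ne]
  exact w_pow_ne_zero (by omega)

end Bmod

theorem statement4_general (m r : ℕ) (hm : 2 ≤ m) [NeZero m]
    (V : Type*) [AddCommGroup V] [Module (Amod m) V]
    [Module.Finite (Amod m) V] [Module.Free (Amod m) V]
    (hrank : Module.finrank (Amod m) V = r)
    (Db : V →ₗ[Amod m] V)
    (ϖ : Bmod m r ⊗[Amod m] V →ₗ[Bmod m r] Bmod m r)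
    (hϖ : Function.Surjective ϖ)
    (μ : Bmod m r) (hμ : Bmod.coeff m r 1 μ ≠ 0)
    (hcompat : ∀ x : Bmod m r ⊗[Amod m] V,
      (r : ℕ) • ϖ (LinearMap.lTensor (Bmod m r) Db x) = μ * ϖ x)
    (U : Submodule (Amod m) V) (hU : ∀ a ∈ U, Db a ∈ U)
    (hfree : Module.Free (Amod m) (V ⧸ U)) :
    U = ⊥ ∨ U = ⊤ := by
  refine or_iff_not_imp_left.2 fun hbot => by_contra fun htop => ?_
  have := U.finite_of_projective_quotient
  have := U.free_of_projective_quotient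
  have hd₁ : 0 < Module.finrank (Amod m) U :=
    (Module.finrank_pos_iff_of_free _ _).2 (Submodule.nontrivial_iff_ne_bot.2 hbot)
  have hd₂ : 0 < Module.finrank (Amod m) (V ⧸ U) :=
    (Module.finrank_pos_iff_of_free _ _).2 (Submodule.Quotient.nontrivial_iff.2 htop)
  have hsum := hrank ▸ U.finrank_add_finrank_quotient_of_free
  have hmr : 2 * r ≤ m * r := Nat.mul_le_mul_right r hm
  have hr : (r : ℂ) ≠ 0 := Nat.cast_ne_zero.2 (by omega)
  set lam := (r : ℂ)⁻¹ • μ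
  have heig : ∀ x, ϖ (Db.lTensor _ x) = lam * ϖ x := fun x => by
    rw [smul_mul_assoc, ← hcompat, ← Nat.cast_smul_eq_nsmul ℂ, inv_smul_smul₀ hr]
  obtain ⟨c, u, hu, hlam⟩ := Bmod.exists_sub_algebraMap_eq_w_mul (b := lam) (by omega)
    (by rw [Bmod.coeff_smul (by omega)]; exact mul_ne_zero (inv_ne_zero hr) hμ)
  obtain ⟨x₀, hx₀⟩ := hϖ 1
  have hprod := ϖ.apply_lTensor_aeval heig
    ((Db.restrict hU).charpoly * (U.mapQ U Db hU).charpoly) x₀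
  rw [Db.aeval_charpoly_restrict_mul_charpoly_mapQ hU, LinearMap.lTensor_zero,
    LinearMap.zero_apply, map_zero, hx₀, mul_one, map_mul] at hprod
  refine Bmod.aeval_mul_aeval_ne_zero (LinearMap.charpoly_monic _) (LinearMap.charpoly_monic _)
    ?_ ?_ ?_ hu hlam hprod.symm <;> simp only [LinearMap.charpoly_natDegree] <;> omega

/-- If `V` is a free `A`-module of rank `r` carrying an `A`-linear map `∇̄`
compatible, via a surjective `B`-linear map `ϖ₀ : B ⊗[A] V → B`, with multiplication by an
element `μ̂₀ ∈ B` whose `w¹`-coefficient is nonzero, then every `∇̄`-invariant `A`-submodule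
`U ⊆ V` with `V/U` free is `0` or `V`. -/
theorem statement4 (m r : ℕ) (hm : 2 ≤ m) (hr : 1 ≤ r) [NeZero m]
    (V : Type*) [AddCommGroup V] [Module (Amod m) V]
    [Module.Finite (Amod m) V] [Module.Free (Amod m) V]
    (hrank : Module.finrank (Amod m) V = r)
    (Db : V →ₗ[Amod m] V)
    (ϖ : Bmod m r ⊗[Amod m] V →ₗ[Bmod m r] Bmod m r)
    (hϖ : Function.Surjective ϖ)
    (μ : Bmod m r) (hμ : Bmod.coeff m r 1 μ ≠ 0)
    (hcompat : ∀ x : Bmod m r ⊗[Amod m] V,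
      (r : ℕ) • ϖ (LinearMap.lTensor (Bmod m r) Db x) = μ * ϖ x)
    (U : Submodule (Amod m) V) (hU : ∀ a ∈ U, Db a ∈ U)
    (hfree : Module.Free (Amod m) (V ⧸ U)) :
    U = ⊥ ∨ U = ⊤ :=
  statement4_general m r hm V hrank Db ϖ hϖ μ hμ hcompat U hU hfree

end
end

section
/- Let V be a free A-module of rank r, let ϖ_0 : V ⊗_A B → B be a surjective B-linear map whose restriction V → B, a ↦ ϖ_0(a⊗1), is also surjective, and let e′_0, …, e′_{r−1} ∈ V satisfy ϖ_0(e′_k⊗1) = w^k for 0 ≤ k ≤ r−1. Let ζ ∈ ℂ be a primitive r-th root of unity and let σ be the A-algebra automorphism of B determined by σ(w) = ζ·w, acting on V ⊗_A B as id_V⊗σ. Then the intersection ⋂_{l=0}^{r−1} ker(σ^{−l}∘ϖ_0∘(id_V⊗σ^l)) equals { Σ_{k=0}^{r−1} e′_k⊗b_k : b_k ∈ (w^{N−k})/(w^N) for each k }, and its ℂ-dimension is r(r−1)/2. -/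
/-!
The vectors `e′ₖ` form an `A`-basis of `V`: reducing mod `z`, their images `wᵏ` (`k < r`)
under `ϖ₀` stay linearly independent in `B/(w^r) = B/zB`, so their determinant against any basis
is a unit of the local ring `A`. Hence every element of `B ⊗ V` is uniquely `Σ bₖ ⊗ e′ₖ`. The twisted map
`σ^{-l} ∘ ϖ₀ ∘ (σ^l ⊗ id)` is again `B`-linear and sends `1 ⊗ e′ₖ` to `σ^{-l}(wᵏ) = ζ^{-lk} wᵏ`,
so it sends `Σ bₖ ⊗ e′ₖ` to `Σₖ ζ^{-lk} bₖ wᵏ`. The Vandermonde matrix `(ζ^{-lk})` is invertible,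
so the element lies in every kernel iff `bₖ wᵏ = 0` for all `k`, i.e. `bₖ ∈ (w^{N-k})`, a
subspace of dimension `k`; and `0 + 1 + ⋯ + (r - 1) = r(r-1)/2`.
-/

open Polynomial TensorProduct

section Tower

noncomputable instance (m r : ℕ) [NeZero m] : IsScalarTower ℂ (Amod m) (Bmod m r) :=
  IsScalarTower.of_algebraMap_eq fun c => by
    have h2 : algebraMap (Amod m) (Bmod m r) (algebraMap ℂ (Amod m) c) =
        AtoB0 m r (Ideal.Quotient.mk (Ideal.span {(Polynomial.X : Polynomial ℂ) ^ m})
          (Polynomial.C c)) := rfl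
    rw [h2, AtoB0, Ideal.Quotient.lift_mk, RingHom.comp_apply]
    by_cases h : 1 ≤ r
    · rw [if_pos h]
      simp only [AlgHom.toRingHom_eq_coe, RingHom.coe_coe, Polynomial.aeval_C]
      rfl
    · rw [if_neg h]
      simp only [AlgHom.toRingHom_eq_coe, RingHom.coe_coe, Polynomial.aeval_C]
      rfl

end Tower

noncomputable section

theorem IsPrimitiveRoot.forall_sum_pow_mul_smul_eq_zero_iff {K M : Type*} [Field K]
    [AddCommGroup M] [Module K M] {ζ : K} {r : ℕ} (hζ : IsPrimitiveRoot ζ r) (y : Fin r → M) :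
    (∀ l : Fin r, ∑ k : Fin r, ζ ^ ((l : ℕ) * k) • y k = 0) ↔ y = 0 := by
  refine ⟨fun h => ?_, by rintro rfl; simp⟩
  set A := Matrix.vandermonde fun l : Fin r => ζ ^ (l : ℕ)
  have hA : IsUnit A.det := isUnit_iff_ne_zero.mpr <| Matrix.det_vandermonde_ne_zero_iff.mpr
    fun i j hij => Fin.ext (hζ.pow_inj i.2 j.2 hij)
  funext k
  calc y k = ∑ j, (A⁻¹ * A) k j • y j := by
        simp [Matrix.nonsing_inv_mul _ hA, Matrix.one_apply]
    _ = ∑ i, A⁻¹ k i • ∑ j : Fin r, ζ ^ ((i : ℕ) * j) • y j := by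
        simp only [A, Matrix.mul_apply, Matrix.vandermonde_apply, ← pow_mul, Finset.sum_smul,
          Finset.smul_sum, smul_smul]
        exact Finset.sum_comm
    _ = 0 := by simp [h]

-- `Amod m` and `Bmod m r` are definitionally `AdjoinRoot (X ^ m)` and `AdjoinRoot (X ^ N)`;
-- the lemmas below are applied to them through this defeq.
namespace AdjoinRoot

variable {R : Type*} [CommRing R] {n : ℕ}

theorem root_X_pow_pow_dvd_mk_iff {t : ℕ} (ht : t ≤ n) (p : R[X]) :
    root (X ^ n : R[X]) ^ t ∣ mk (X ^ n) p ↔ X ^ t ∣ p := by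
  constructor
  · rintro ⟨b, hb⟩
    obtain ⟨q, rfl⟩ := mk_surjective b
    rw [← mk_X, ← map_pow, ← map_mul, mk_eq_mk] at hb
    simpa using dvd_add ((pow_dvd_pow X ht).trans hb) (dvd_mul_right _ q)
  · rintro ⟨q, rfl⟩
    exact ⟨mk _ q, by rw [map_mul, map_pow, mk_X]⟩

theorem mul_root_X_pow_pow_eq_zero_iff {k : ℕ} (hk : k ≤ n) (b : AdjoinRoot (X ^ n : R[X])) :
    b * root (X ^ n) ^ k = 0 ↔ b ∈ Ideal.span {root (X ^ n : R[X]) ^ (n - k)} := by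
  obtain ⟨p, rfl⟩ := mk_surjective b
  rw [Ideal.mem_span_singleton, root_X_pow_pow_dvd_mk_iff (Nat.sub_le n k), ← mk_X, ← map_pow,
    ← map_mul, mk_eq_zero, mul_comm, ← Nat.add_sub_cancel' hk, pow_add, Nat.add_sub_cancel_left]
  exact (isRegular_X_pow k).left.dvd_cancel_left

theorem eq_zero_of_sum_smul_root_pow_mem_span {r : ℕ} (hr : r ≤ n) (c : Fin r → R)
    (h : ∑ k : Fin r, c k • root (X ^ n : R[X]) ^ (k : ℕ) ∈ Ideal.span {root (X ^ n : R[X]) ^ r}) :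
    c = 0 := by
  have hsum : ∑ k : Fin r, c k • root (X ^ n : R[X]) ^ (k : ℕ) =
      mk _ (∑ k : Fin r, C (c k) * X ^ (k : ℕ)) := by
    simp only [map_sum, map_mul, map_pow, mk_X, mk_C, Algebra.smul_def, algebraMap_eq]
  rw [hsum, Ideal.mem_span_singleton, root_X_pow_pow_dvd_mk_iff hr, X_pow_dvd_iff] at h
  funext k
  simpa [finsetSum_coeff, coeff_X_pow, Fin.val_eq_val] using h k k.2

variable {K : Type*} [Field K]

theorem finrank_span_root_X_pow_pow {t : ℕ} (ht : t ≤ n) :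
    Module.finrank K ((Ideal.span {root (X ^ n : K[X]) ^ t}).restrictScalars K) = n - t := by
  have hdim (j : ℕ) : Module.finrank K (AdjoinRoot (X ^ j : K[X])) = j := by
    rw [(powerBasis' (monic_X_pow j)).finrank, powerBasis'_dim, natDegree_X_pow]
  have := (monic_X_pow (R := K) n).finite_adjoinRoot
  let π := (algHomOfDvd K (X ^ n : K[X]) (X ^ t) (pow_dvd_pow X ht)).toLinearMap
  have hπ (p : K[X]) : π (mk _ p) = mk _ p := aeval_eq p
  have hker : LinearMap.ker π = (Ideal.span {root (X ^ n : K[X]) ^ t}).restrictScalars K := by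
    ext b
    obtain ⟨p, rfl⟩ := mk_surjective b
    simp [hπ, mk_eq_zero, Ideal.mem_span_singleton, root_X_pow_pow_dvd_mk_iff ht]
  have hrange : LinearMap.range π = ⊤ := by
    refine LinearMap.range_eq_top.mpr fun b => ?_
    obtain ⟨p, rfl⟩ := mk_surjective b
    exact ⟨mk _ p, hπ p⟩
  have := LinearMap.finrank_range_add_finrank_ker π
  rw [hrange, finrank_top, hker, hdim, hdim] at this
  omega

variable [NeZero n]

def constCoeff : AdjoinRoot (X ^ n : K[X]) →ₐ[K] K :=
  liftAlgHom _ (AlgHom.id K K) 0 (by simp [NeZero.ne n])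

theorem root_dvd_of_constCoeff_eq_zero {x : AdjoinRoot (X ^ n : K[X])} (hx : constCoeff x = 0) :
    root (X ^ n) ∣ x := by
  obtain ⟨p, rfl⟩ := mk_surjective x
  have hp : X ∣ p := X_dvd_iff.mpr (by simpa [constCoeff, coeff_zero_eq_eval_zero] using hx)
  simpa using (root_X_pow_pow_dvd_mk_iff NeZero.one_le p).mpr (by simpa using hp)

theorem isUnit_of_constCoeff_ne_zero {x : AdjoinRoot (X ^ n : K[X])} (hx : constCoeff x ≠ 0) :
    IsUnit x := by
  obtain ⟨y, hy⟩ := root_dvd_of_constCoeff_eq_zero (x := x - algebraMap K _ (constCoeff x))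
    (by rw [map_sub, AlgHom.commutes, Algebra.algebraMap_self, RingHom.id_apply, sub_self])
  have hnil : IsNilpotent (x - algebraMap K _ (constCoeff x)) :=
    ⟨n, by rw [hy, mul_pow, ← mk_X, ← map_pow, mk_self, zero_mul]⟩
  have := hnil.isUnit_add_right_of_commute ((isUnit_iff_ne_zero.mpr hx).map (algebraMap K _))
    (Commute.all _ _)
  rwa [sub_add_cancel] at this

end AdjoinRoot

namespace Module.Basis

theorem isUnit_det_of_linearIndependent_mod_ker {K R V ι : Type*} [Field K] [CommRing R]
    [Algebra K R] [AddCommGroup V] [Module R V] [Fintype ι] [DecidableEq ι]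
    (ε : R →ₐ[K] K) (hε : ∀ x, ε x ≠ 0 → IsUnit x) (f : Basis ι R V) (e : ι → V)
    (he : ∀ c : ι → K, (∀ j, ε (f.repr (∑ i, algebraMap K R (c i) • e i) j) = 0) → c = 0) :
    IsUnit (f.det e) := by
  refine hε _ fun h0 => ?_
  rw [det_apply, ← AlgHom.coe_toRingHom, RingHom.map_det] at h0
  obtain ⟨c, hc, hMc⟩ := Matrix.exists_mulVec_eq_zero_iff.mpr h0
  refine hc (he c fun j => ?_)
  simpa [Matrix.mulVec, dotProduct, toMatrix_apply, Algebra.smul_def, mul_comm]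
    using congrFun hMc j

variable {B M ι : Type*} [CommRing B] [AddCommGroup M] [Module B M] [Fintype ι]

theorem coe_eq_of_forall_sum_smul_mem_iff (β : Basis ι B M) {S : Set M} {P : ι → B → Prop}
    (h : ∀ b : ι → B, ∑ k, b k • β k ∈ S ↔ ∀ k, P k (b k)) :
    S = {x | ∃ b : ι → B, (∀ k, P k (b k)) ∧ x = ∑ k, b k • β k} := by
  ext x
  constructor
  · intro hx
    exact ⟨β.repr x, (h _).mp (by rwa [β.sum_repr]), (β.sum_repr x).symm⟩
  · rintro ⟨b, hb, rfl⟩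
    exact (h b).mpr hb

theorem finrank_eq_sum_of_forall_sum_smul_mem_iff {K : Type*} [Field K] [Algebra K B]
    [Module K M] [IsScalarTower K B M] (β : Basis ι B M) (p : ι → Submodule K B)
    [∀ k, FiniteDimensional K (p k)] {S : Submodule K M}
    (h : ∀ b : ι → B, ∑ k, b k • β k ∈ S ↔ ∀ k, b k ∈ p k) :
    Module.finrank K S = ∑ k, Module.finrank K (p k) := by
  let Ψ : (∀ k, p k) →ₗ[K] M := (β.equivFun.symm.restrictScalars K).toLinearMap ∘ₗ
    LinearMap.pi fun k => (p k).subtype ∘ₗ LinearMap.proj k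
  have hΨ : LinearMap.range Ψ = S := by
    refine SetLike.coe_injective ((β.coe_eq_of_forall_sum_smul_mem_iff h).symm ▸ ?_)
    ext x
    constructor
    · rintro ⟨b, rfl⟩
      exact ⟨fun k => b k, fun k => (b k).2, by simp [Ψ, equivFun_symm_apply]⟩
    · rintro ⟨b, hb, rfl⟩
      exact ⟨fun k => ⟨b k, hb k⟩, by simp [Ψ, equivFun_symm_apply]⟩
  have hinj : Function.Injective Ψ :=
    β.equivFun.symm.injective.comp fun b b' h => funext fun k => Subtype.ext (congrFun h k)
  rw [← hΨ, LinearMap.finrank_range_of_inj hinj, Module.finrank_pi_fintype]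

end Module.Basis

namespace AlgEquiv

section Semiring

variable {S R B : Type*} [CommSemiring S] [CommSemiring R] [Semiring B] [Algebra S R]
  [Algebra S B] [Algebra R B] [IsScalarTower S R B]

theorem pow_apply_pow_of_apply_eq_smul (τ : B ≃ₐ[R] B) {c : S} {w : B} (h : τ w = c • w)
    (l k : ℕ) : (τ ^ l) (w ^ k) = c ^ (l * k) • w ^ k := by
  have hl : (τ ^ l) w = c ^ l • w := by
    induction l with
    | zero => simp
    | succ l ih =>
      rw [pow_succ, mul_apply, h, ← algebraMap_smul R c w, map_smul, algebraMap_smul, ih,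
        smul_smul, pow_succ']
  rw [map_pow, hl, _root_.smul_pow, pow_mul]

theorem inv_apply_eq_smul_of_apply_eq_smul {K : Type*} [Field K] [Algebra K R] [Algebra K B]
    [IsScalarTower K R B] (τ : B ≃ₐ[R] B) {c : K} (hc : c ≠ 0) {w : B} (h : τ w = c • w) :
    τ⁻¹ w = c⁻¹ • w := by
  apply τ.injective
  rw [aut_inv, apply_symm_apply, ← algebraMap_smul R, map_smul, algebraMap_smul, h, smul_smul,
    inv_mul_cancel₀ hc, one_smul]

end Semiring

variable {S R B V : Type*} [CommSemiring S] [CommSemiring R] [CommSemiring B] [Algebra S R]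
  [Algebra S B] [Algebra R B] [IsScalarTower S R B] [AddCommMonoid V] [Module R V]
  (ϖ : B ⊗[R] V →ₗ[B] B)

theorem inv_apply_rTensor_tmul (τ : B ≃ₐ[R] B) (b : B) (v : V) :
    τ⁻¹ (ϖ (LinearMap.rTensor V τ.toLinearMap (b ⊗ₜ v))) = b * τ⁻¹ (ϖ (1 ⊗ₜ v)) := by
  rw [LinearMap.rTensor_tmul, toLinearMap_apply, ← mul_one (τ b), ← smul_eq_mul, ← smul_tmul',
    map_smul, smul_eq_mul, map_mul, aut_inv, symm_apply_apply]

theorem inv_pow_apply_rTensor_sum_tmul (σ : B ≃ₐ[R] B) {c : S} {w : B} (hσ : σ⁻¹ w = c • w)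
    {r : ℕ} {e : Fin r → V} (he : ∀ k, ϖ (1 ⊗ₜ e k) = w ^ (k : ℕ)) (l : ℕ) (b : Fin r → B) :
    (σ⁻¹ ^ l) (ϖ (LinearMap.rTensor V (σ ^ l).toLinearMap (∑ k, b k ⊗ₜ e k))) =
      ∑ k : Fin r, c ^ (l * k) • (b k * w ^ (k : ℕ)) := by
  simp only [inv_pow σ, map_sum, inv_apply_rTensor_tmul, he]
  refine Finset.sum_congr rfl fun k _ => ?_
  rw [← inv_pow, σ⁻¹.pow_apply_pow_of_apply_eq_smul hσ, mul_smul_comm]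

end AlgEquiv

theorem Amod.algebraMap_z {m r : ℕ} [NeZero m] (hr : 1 ≤ r) :
    algebraMap (Amod m) (Bmod m r) (Amod.z m) = Bmod.w m r ^ r := by
  change AtoB0 m r (Ideal.Quotient.mk _ X) = _
  rw [AtoB0, Ideal.Quotient.lift_mk, RingHom.comp_apply, if_pos hr]
  simp only [AlgHom.toRingHom_eq_coe, RingHom.coe_coe, aeval_X, map_pow]
  rfl

theorem Amod.exists_basis_of_map_eq_w_pow {m r : ℕ} [NeZero m] (hm : 2 ≤ m) (hr : 1 ≤ r)
    {V : Type*} [AddCommGroup V] [Module (Amod m) V] [Module.Finite (Amod m) V]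
    [Module.Free (Amod m) V] (hrank : Module.finrank (Amod m) V = r)
    (φ : V →ₗ[Amod m] Bmod m r) (e : Fin r → V) (he : ∀ k, φ (e k) = Bmod.w m r ^ (k : ℕ)) :
    ∃ b : Module.Basis (Fin r) (Amod m) V, ⇑b = e := by
  have : Nontrivial (Amod m) := AdjoinRoot.nontrivial (f := (X ^ m : ℂ[X])) (by simp [NeZero.ne m])
  have hrN : r ≤ m * r - r + 1 := by have := Nat.mul_le_mul_right r hm; omega
  let f : Module.Basis (Fin r) (Amod m) V := (Module.Free.chooseBasis (Amod m) V).reindex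
    (Fintype.equivFinOfCardEq (by rw [← Module.finrank_eq_card_chooseBasisIndex, hrank]))
  let ε : Amod m →ₐ[ℂ] ℂ := AdjoinRoot.constCoeff
  have hdet : IsUnit (f.det e) := by
    refine f.isUnit_det_of_linearIndependent_mod_ker ε
      (fun _ => AdjoinRoot.isUnit_of_constCoeff_ne_zero) e fun c hc => ?_
    refine AdjoinRoot.eq_zero_of_sum_smul_root_pow_mem_span hrN c ?_
    set v := ∑ i, algebraMap ℂ (Amod m) (c i) • e i
    have hφv : φ v = ∑ k, c k • Bmod.w m r ^ (k : ℕ) := by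
      simp only [v, map_sum, map_smul, he, algebraMap_smul]
    change ∑ k, c k • Bmod.w m r ^ (k : ℕ) ∈ Ideal.span {Bmod.w m r ^ r}
    rw [← hφv, ← f.sum_repr v, map_sum]
    refine Ideal.sum_mem _ fun j _ => ?_
    obtain ⟨a, ha⟩ : Amod.z m ∣ f.repr v j := AdjoinRoot.root_dvd_of_constCoeff_eq_zero (hc j)
    rw [map_smul, ha, Algebra.smul_def, map_mul, Amod.algebraMap_z hr, mul_assoc]
    exact Ideal.mul_mem_right _ _ (Ideal.mem_span_singleton_self _)
  obtain ⟨hli, hsp⟩ := (Module.Basis.is_basis_iff_det f).mpr hdet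
  exact ⟨Module.Basis.mk hli hsp.ge, Module.Basis.coe_mk hli hsp.ge⟩

theorem statement6_general (m r : ℕ) (hm : 2 ≤ m) (hr : 1 ≤ r) [NeZero m]
    (V : Type*) [AddCommGroup V] [Module (Amod m) V]
    [Module.Finite (Amod m) V] [Module.Free (Amod m) V]
    (hrank : Module.finrank (Amod m) V = r)
    (ϖ : Bmod m r ⊗[Amod m] V →ₗ[Bmod m r] Bmod m r)
    (e : Fin r → V)
    (he : ∀ k : Fin r, ϖ ((1 : Bmod m r) ⊗ₜ e k) = Bmod.w m r ^ (k : ℕ))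
    (ζ : ℂ) (hζ : IsPrimitiveRoot ζ r)
    (σ : Bmod m r ≃ₐ[Amod m] Bmod m r)
    (hσ : σ (Bmod.w m r) = algebraMap ℂ (Bmod m r) ζ * Bmod.w m r)
    (F : Fin r → (Bmod m r ⊗[Amod m] V →ₗ[ℂ] Bmod m r))
    (hF : ∀ (l : Fin r) (x : Bmod m r ⊗[Amod m] V),
      F l x = (σ⁻¹ ^ (l : ℕ)) (ϖ (LinearMap.rTensor V (σ ^ (l : ℕ)).toLinearMap x))) :
    (↑(⨅ l : Fin r, LinearMap.ker (F l)) : Set (Bmod m r ⊗[Amod m] V)) =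
      {x | ∃ b : Fin r → Bmod m r,
        (∀ k : Fin r, b k ∈ Ideal.span {Bmod.w m r ^ (m * r - r + 1 - (k : ℕ))}) ∧
        x = ∑ k : Fin r, b k ⊗ₜ e k}
    ∧ Module.finrank ℂ ↥(⨅ l : Fin r, LinearMap.ker (F l)) = r * (r - 1) / 2 := by
  have hrN : r ≤ m * r - r + 1 := by have := Nat.mul_le_mul_right r hm; omega
  obtain ⟨eb, rfl⟩ := Amod.exists_basis_of_map_eq_w_pow hm hr hrank
    ((ϖ.restrictScalars (Amod m)) ∘ₗ TensorProduct.mk (Amod m) (Bmod m r) V 1) e he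
  let β := eb.baseChange (Bmod m r)
  have hβ (b : Fin r → Bmod m r) : ∑ k, b k • β k = ∑ k, b k ⊗ₜ eb k := by simp [β, smul_tmul']
  have hσinv : σ⁻¹ (Bmod.w m r) = ζ⁻¹ • Bmod.w m r :=
    σ.inv_apply_eq_smul_of_apply_eq_smul (K := ℂ) (hζ.ne_zero (by omega)) (by rw [hσ, Algebra.smul_def])
  have hmem (b : Fin r → Bmod m r) : ∑ k, b k • β k ∈ ⨅ l, LinearMap.ker (F l) ↔
      ∀ k : Fin r, b k ∈ Ideal.span {Bmod.w m r ^ (m * r - r + 1 - (k : ℕ))} := by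
    simp only [hβ, Submodule.mem_iInf, LinearMap.mem_ker, hF,
      σ.inv_pow_apply_rTensor_sum_tmul ϖ hσinv he]
    rw [hζ.inv.forall_sum_pow_mul_smul_eq_zero_iff, funext_iff]
    exact forall_congr' fun k =>
      AdjoinRoot.mul_root_X_pow_pow_eq_zero_iff (k.2.le.trans hrN) (b k)
  have : Module.Finite ℂ (Bmod m r) := (monic_X_pow (R := ℂ) (m * r - r + 1)).finite_adjoinRoot
  refine ⟨by simpa only [hβ] using β.coe_eq_of_forall_sum_smul_mem_iff hmem, ?_⟩
  rw [β.finrank_eq_sum_of_forall_sum_smul_mem_iff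
    (fun k => (Ideal.span {Bmod.w m r ^ (m * r - r + 1 - (k : ℕ))}).restrictScalars ℂ) hmem]
  calc ∑ k : Fin r, Module.finrank ℂ
        ((Ideal.span {Bmod.w m r ^ (m * r - r + 1 - (k : ℕ))}).restrictScalars ℂ)
      = ∑ k : Fin r, (k : ℕ) := Finset.sum_congr rfl fun k _ =>
        (AdjoinRoot.finrank_span_root_X_pow_pow (K := ℂ) (Nat.sub_le _ _)).trans
          (by have := k.2; omega)
    _ = r * (r - 1) / 2 := by rw [Fin.sum_univ_eq_sum_range (fun i => i), Finset.sum_range_id]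

/-- Kernel description for the Galois-twisted quotient maps: the intersection
`⋂ₗ ker(σ^{−l} ∘ ϖ₀ ∘ (id ⊗ σˡ))` consists of the sums `Σₖ bₖ ⊗ e′ₖ` with
`bₖ ∈ (w^{N−k})`, and has `ℂ`-dimension `r(r−1)/2`. -/
theorem statement6 (m r : ℕ) (hm : 2 ≤ m) (hr : 1 ≤ r) [NeZero m]
    (V : Type*) [AddCommGroup V] [Module (Amod m) V]
    [Module.Finite (Amod m) V] [Module.Free (Amod m) V]
    (hrank : Module.finrank (Amod m) V = r)
    (ϖ : Bmod m r ⊗[Amod m] V →ₗ[Bmod m r] Bmod m r)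
    (hϖ : Function.Surjective ϖ)
    (hϖV : Function.Surjective (fun a : V => ϖ ((1 : Bmod m r) ⊗ₜ a)))
    (e : Fin r → V)
    (he : ∀ k : Fin r, ϖ ((1 : Bmod m r) ⊗ₜ e k) = Bmod.w m r ^ (k : ℕ))
    (ζ : ℂ) (hζ : IsPrimitiveRoot ζ r)
    (σ : Bmod m r ≃ₐ[Amod m] Bmod m r)
    (hσ : σ (Bmod.w m r) = algebraMap ℂ (Bmod m r) ζ * Bmod.w m r)
    (F : Fin r → (Bmod m r ⊗[Amod m] V →ₗ[ℂ] Bmod m r))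
    (hF : ∀ (l : Fin r) (x : Bmod m r ⊗[Amod m] V),
      F l x = (σ⁻¹ ^ (l : ℕ)) (ϖ (LinearMap.rTensor V (σ ^ (l : ℕ)).toLinearMap x))) :
    (↑(⨅ l : Fin r, LinearMap.ker (F l)) : Set (Bmod m r ⊗[Amod m] V)) =
      {x | ∃ b : Fin r → Bmod m r,
        (∀ k : Fin r, b k ∈ Ideal.span {Bmod.w m r ^ (m * r - r + 1 - (k : ℕ))}) ∧
        x = ∑ k : Fin r, b k ⊗ₜ e k}
    ∧ Module.finrank ℂ ↥(⨅ l : Fin r, LinearMap.ker (F l)) = r * (r - 1) / 2 :=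
  statement6_general m r hm hr V hrank ϖ e he ζ hζ σ hσ F hF

end
end

section
/- Let V be a free A-module of rank r and let p : V → B be a surjective A-linear map. Then any elements e_0, …, e_{r−1} ∈ V with p(e_k) = w^k for 0 ≤ k ≤ r−1 form an A-basis of V. -/
open Polynomial TensorProduct

noncomputable section

/-! The ring `A` is local with maximal ideal `(z)`, and `p` maps `zV` into `w^r B`. Since
`r ≤ N`, the monomials `1, w, …, w^{r-1}` stay linearly independent over `ℂ` modulo `w^r`,
so the `e_k` are linearly independent modulo the maximal ideal of `A`. Over a local ring this
forces the matrix of `e` in any basis of `V` to have a unit determinant. -/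

open IsLocalRing

theorem Module.Basis.mem_smul_top_of_repr_mem {R V ι : Type*} [CommRing R] [AddCommGroup V]
    [Module R V] [Fintype ι] (c : Module.Basis ι R V) {I : Ideal R} {x : V}
    (hx : ∀ i, c.repr x i ∈ I) : x ∈ I • (⊤ : Submodule R V) := by
  rw [← c.sum_repr x]
  exact Submodule.sum_mem _ fun i _ => Submodule.smul_mem_smul (hx i) Submodule.mem_top

theorem IsLocalRing.isUnit_det_of_forall_mem_maximalIdeal {R V ι : Type*} [CommRing R]
    [IsLocalRing R] [AddCommGroup V] [Module R V] [Fintype ι] [DecidableEq ι]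
    (c : Module.Basis ι R V) (e : ι → V)
    (he : ∀ u : ι → R, ∑ i, u i • e i ∈ maximalIdeal R • (⊤ : Submodule R V) →
      ∀ i, u i ∈ maximalIdeal R) :
    IsUnit (c.det e) := by
  rw [← residue_ne_zero_iff_isUnit, c.det_apply, RingHom.map_det]
  intro hdet
  obtain ⟨v, hv, hMv⟩ := Matrix.exists_mulVec_eq_zero_iff.mpr hdet
  choose u hu using fun i => residue_surjective (v i)
  refine hv (funext fun i => ?_)
  rw [← hu i, Pi.zero_apply, residue_eq_zero_iff]
  refine he u (c.mem_smul_top_of_repr_mem fun j => ?_) i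
  rw [← residue_eq_zero_iff]
  simpa [Matrix.mulVec, dotProduct, Module.Basis.toMatrix_apply, hu, mul_comm] using
    congrFun hMv j

namespace Amod

theorem z_pow_eq_zero {m : ℕ} : Amod.z m ^ m = 0 :=
  (map_pow _ _ _).symm.trans
    (Ideal.Quotient.eq_zero_iff_mem.mpr (Ideal.mem_span_singleton_self _))

variable (m : ℕ) [NeZero m]

def constCoeff : Amod m →+* ℂ :=
  Ideal.Quotient.lift _ (Polynomial.evalRingHom 0) fun f hf => by
    obtain ⟨g, rfl⟩ := Ideal.mem_span_singleton.mp hf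
    simp [zero_pow (NeZero.ne m)]

variable {m}

theorem constCoeff_mk (f : ℂ[X]) : constCoeff m (Amod.mk m f) = f.eval 0 :=
  Ideal.Quotient.lift_mk _ _ _

theorem constCoeff_algebraMap (s : ℂ) : constCoeff m (algebraMap ℂ (Amod m) s) = s :=
  (constCoeff_mk (C s)).trans eval_C

theorem z_dvd_of_constCoeff_eq_zero {a : Amod m} (ha : constCoeff m a = 0) : Amod.z m ∣ a := by
  obtain ⟨f, rfl⟩ := Ideal.Quotient.mk_surjective a
  obtain ⟨g, rfl⟩ : (X : ℂ[X]) ∣ f := by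
    rwa [Polynomial.X_dvd_iff, Polynomial.coeff_zero_eq_eval_zero, ← constCoeff_mk (m := m)]
  exact ⟨Amod.mk m g, map_mul _ _ _⟩

/-- `a` is a unit plus a multiple of the nilpotent `z`. -/
theorem isUnit_of_constCoeff_ne_zero {a : Amod m} (ha : constCoeff m a ≠ 0) : IsUnit a := by
  set s := constCoeff m a
  obtain ⟨b, hb⟩ : Amod.z m ∣ a - algebraMap ℂ (Amod m) s :=
    z_dvd_of_constCoeff_eq_zero (by simp [s, constCoeff_algebraMap])
  have hnil : IsNilpotent (Amod.z m * b) :=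
    (Commute.all _ _).isNilpotent_mul_right ⟨m, z_pow_eq_zero⟩
  have hunit : IsUnit (algebraMap ℂ (Amod m) s) := (isUnit_iff_ne_zero.mpr ha).map _
  simpa [← hb] using hnil.isUnit_add_left_of_commute hunit (Commute.all _ _)

instance : Nontrivial (Amod m) :=
  (constCoeff m).domain_nontrivial

instance : IsLocalRing (Amod m) :=
  .of_isUnit_or_isUnit_one_sub_self fun a => by
    by_cases ha : constCoeff m a = 0
    · exact .inr (isUnit_of_constCoeff_ne_zero (by simp [ha]))
    · exact .inl (isUnit_of_constCoeff_ne_zero ha)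

theorem mem_maximalIdeal_iff {a : Amod m} : a ∈ maximalIdeal (Amod m) ↔ constCoeff m a = 0 := by
  rw [mem_maximalIdeal, mem_nonunits_iff, not_iff_comm]
  exact ⟨isUnit_of_constCoeff_ne_zero, fun h => (h.map (constCoeff m)).ne_zero⟩

end Amod

namespace Bmod

variable {m r : ℕ}

theorem aeval_w (f : ℂ[X]) : aeval (Bmod.w m r) f = Bmod.mk m r f :=
  (aeval_algHom_apply (Ideal.Quotient.mkₐ ℂ (Ideal.span {(X : ℂ[X]) ^ (m * r - r + 1)}))
    X f).trans (congrArg _ (aeval_X_left_apply f))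

theorem X_pow_dvd_of_mk_mem_span_w_pow {k : ℕ} (hk : k ≤ m * r - r + 1) {f : ℂ[X]}
    (hf : Bmod.mk m r f ∈ Ideal.span {Bmod.w m r ^ k}) : X ^ k ∣ f := by
  obtain ⟨b, hb⟩ := Ideal.mem_span_singleton'.mp hf
  obtain ⟨g, rfl⟩ := Ideal.Quotient.mk_surjective b
  have hdiff : X ^ (m * r - r + 1) ∣ g * X ^ k - f := by
    rw [← Ideal.mem_span_singleton, ← Ideal.Quotient.eq_zero_iff_mem, map_sub, map_mul, map_pow]
    exact sub_eq_zero.mpr hb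
  exact (dvd_sub_right (dvd_mul_left _ _)).mp ((pow_dvd_pow X hk).trans hdiff)

end Bmod

section AtoB

variable {m r : ℕ} [NeZero m]

theorem AtoB_mk (hr : 1 ≤ r) (f : ℂ[X]) :
    AtoB m r (Amod.mk m f) = Bmod.mk m r (aeval (X ^ r) f) := by
  show AtoB0 m r _ = _
  rw [AtoB0, Amod.mk, Ideal.Quotient.lift_mk, if_pos hr]
  rfl

theorem AtoB_algebraMap (hr : 1 ≤ r) (s : ℂ) :
    AtoB m r (algebraMap ℂ (Amod m) s) = algebraMap ℂ (Bmod m r) s :=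
  (AtoB_mk hr (C s)).trans (congrArg _ (aeval_C _ _))

theorem AtoB_z (hr : 1 ≤ r) : AtoB m r (Amod.z m) = Bmod.w m r ^ r := by
  rw [Amod.z, AtoB_mk hr, ← Bmod.aeval_w]
  simp

theorem AtoB_sub_algebraMap_constCoeff_mem (hr : 1 ≤ r) (a : Amod m) :
    AtoB m r a - algebraMap ℂ (Bmod m r) (Amod.constCoeff m a) ∈
      Ideal.span {Bmod.w m r ^ r} := by
  obtain ⟨b, hb⟩ : Amod.z m ∣ a - algebraMap ℂ (Amod m) (Amod.constCoeff m a) :=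
    Amod.z_dvd_of_constCoeff_eq_zero (by simp [Amod.constCoeff_algebraMap])
  rw [← AtoB_algebraMap hr, ← map_sub, hb, map_mul, AtoB_z hr]
  exact Ideal.mul_mem_right _ _ (Ideal.mem_span_singleton_self _)

end AtoB

section LinearIndependenceModuloMaximalIdeal

variable {m r : ℕ} [NeZero m] {V : Type*} [AddCommGroup V] [Module (Amod m) V]

theorem map_mem_span_w_pow_of_mem_maximalIdeal_smul_top (hr : 1 ≤ r)
    (p : V →ₗ[Amod m] Bmod m r) {x : V}
    (hx : x ∈ maximalIdeal (Amod m) • (⊤ : Submodule (Amod m) V)) :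
    p x ∈ Ideal.span {Bmod.w m r ^ r} := by
  have hle : maximalIdeal (Amod m) • (⊤ : Submodule (Amod m) V) ≤
      ((Ideal.span {Bmod.w m r ^ r}).restrictScalars (Amod m)).comap p := by
    refine Submodule.smul_le.mpr fun a ha v _ => ?_
    have hAtoB := AtoB_sub_algebraMap_constCoeff_mem hr a
    rw [Amod.mem_maximalIdeal_iff.mp ha, map_zero, sub_zero] at hAtoB
    rw [Submodule.mem_comap, map_smul, Algebra.smul_def]
    exact Ideal.mul_mem_right _ _ hAtoB
  exact hle hx

theorem mem_maximalIdeal_of_sum_smul_mem_maximalIdeal_smul_top (hm : 2 ≤ m) (hr : 1 ≤ r)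
    (p : V →ₗ[Amod m] Bmod m r) (e : Fin r → V)
    (he : ∀ k : Fin r, p (e k) = Bmod.w m r ^ (k : ℕ)) (u : Fin r → Amod m)
    (hu : ∑ k, u k • e k ∈ maximalIdeal (Amod m) • (⊤ : Submodule (Amod m) V))
    (k : Fin r) :
    u k ∈ maximalIdeal (Amod m) := by
  set c : Fin r → ℂ := fun k => Amod.constCoeff m (u k)
  have hdiff : p (∑ k, u k • e k) - aeval (Bmod.w m r) (ofFn r c) ∈
      Ideal.span {Bmod.w m r ^ r} := by
    rw [map_sum, ofFn_eq_sum_monomial, map_sum, ← Finset.sum_sub_distrib]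
    refine Ideal.sum_mem _ fun k _ => ?_
    rw [map_smul, he, aeval_monomial, Algebra.smul_def, ← sub_mul]
    exact Ideal.mul_mem_right _ _ (AtoB_sub_algebraMap_constCoeff_mem hr (u k))
  have hdvd : X ^ r ∣ ofFn r c := by
    have hrN : r ≤ m * r - r + 1 := by
      have := Nat.mul_le_mul_right r hm
      omega
    refine Bmod.X_pow_dvd_of_mk_mem_span_w_pow hrN ?_
    rw [← Bmod.aeval_w]
    exact (Submodule.sub_mem_iff_right _
      (map_mem_span_w_pow_of_mem_maximalIdeal_smul_top hr p hu)).mp hdiff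
  have hzero : ofFn r c = 0 :=
    eq_zero_of_dvd_of_degree_lt hdvd (by simpa using ofFn_degree_lt c)
  rw [Amod.mem_maximalIdeal_iff]
  exact congrFun (injective_ofFn r (hzero.trans (map_zero _).symm)) k

end LinearIndependenceModuloMaximalIdeal

theorem statement8_general (m r : ℕ) (hm : 2 ≤ m) (hr : 1 ≤ r) [NeZero m]
    (V : Type*) [AddCommGroup V] [Module (Amod m) V]
    [Module.Finite (Amod m) V] [Module.Free (Amod m) V]
    (hrank : Module.finrank (Amod m) V = r)
    (p : V →ₗ[Amod m] Bmod m r)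
    (e : Fin r → V) (he : ∀ k : Fin r, p (e k) = Bmod.w m r ^ (k : ℕ)) :
    ∃ b : Module.Basis (Fin r) (Amod m) V, ∀ k, b k = e k := by
  let c := Module.finBasisOfFinrankEq (Amod m) V hrank
  obtain ⟨hli, hspan⟩ := c.is_basis_iff_det.mpr <| isUnit_det_of_forall_mem_maximalIdeal c e
    (mem_maximalIdeal_of_sum_smul_mem_maximalIdeal_smul_top hm hr p e he)
  exact ⟨.mk hli hspan.ge, Module.Basis.mk_apply hli hspan.ge⟩

/-- If `V` is a free `A`-module of rank `r` and `p : V → B` is a surjective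
`A`-linear map, then any elements `e₀, …, e_{r−1} ∈ V` with `p(eₖ) = wᵏ` form an `A`-basis of
`V`. -/
theorem statement8 (m r : ℕ) (hm : 2 ≤ m) (hr : 1 ≤ r) [NeZero m]
    (V : Type*) [AddCommGroup V] [Module (Amod m) V]
    [Module.Finite (Amod m) V] [Module.Free (Amod m) V]
    (hrank : Module.finrank (Amod m) V = r)
    (p : V →ₗ[Amod m] Bmod m r) (hp : Function.Surjective p)
    (e : Fin r → V) (he : ∀ k : Fin r, p (e k) = Bmod.w m r ^ (k : ℕ)) :
    ∃ b : Module.Basis (Fin r) (Amod m) V, ∀ k, b k = e k :=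
  statement8_general m r hm hr V hrank p e he

end
end

section
/- Let m ≥ 1 and let (W,∇) be a formal connection with pole order m on a finite free ℂ[[z]]-module W. Let K = ℂ((z)) be the field of formal Laurent series, the fraction field of ℂ[[z]], and let ∇_K : W ⊗_{ℂ[[z]]} K → W ⊗_{ℂ[[z]]} K be the unique ℂ-linear extension of ∇ satisfying ∇_K(f·x) = z^m·f′·x + f·∇_K(x) for f ∈ K and x ∈ W ⊗ K, where f′ is the formal derivative of the Laurent series f. If W′ ⊆ W ⊗_{ℂ[[z]]} K is a K-linear subspace with ∇_K(W′) ⊆ W′, then W̃′ := {a ∈ W : a⊗1 ∈ W′} is a ℂ[[z]]-submodule of W with ∇(W̃′) ⊆ W̃′, the quotient W/W̃′ is a free ℂ[[z]]-module, and the K-span of {a⊗1 : a ∈ W̃′} in W ⊗ K equals W′. -/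
open PowerSeries TensorProduct

noncomputable section

set_option maxHeartbeats 1000000
set_option synthInstance.maxHeartbeats 400000

/-- Auxiliary: a quotient of a f.g. module over a PID by a "saturated" submodule is free. -/
theorem auxFree {R M : Type*} [CommRing R] [IsDomain R] [IsPrincipalIdealRing R]
    [AddCommGroup M] [Module R M] [Module.Finite R M] (N : Submodule R M)
    (h : ∀ (f : R) (a : M), f ≠ 0 → f • a ∈ N → a ∈ N) : Module.Free R (M ⧸ N) := by
  haveI : NoZeroSMulDivisors R (M ⧸ N) := by
    constructor
    intro f x hfx
    by_cases hf : f = 0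
    · exact Or.inl hf
    right
    obtain ⟨a, rfl⟩ := Submodule.Quotient.mk_surjective N x
    rw [← Submodule.Quotient.mk_smul, Submodule.Quotient.mk_eq_zero] at hfx
    rw [Submodule.Quotient.mk_eq_zero]
    exact h f a hf hfx
  exact Module.free_of_finite_type_torsion_free'

/-- Let `(W,∇)` be a formal connection with pole order `m ≥ 1` on a finite
free `ℂ[[z]]`-module, `K = ℂ((z))`, and `∇_K` the unique extension of `∇` to `W ⊗ K`
satisfying the Leibniz rule (with respect to the formal derivative `d` of Laurent series).
If `W' ⊆ W ⊗ K` is a `K`-subspace with `∇_K(W') ⊆ W'`, then `W̃' = {a ∈ W : a ⊗ 1 ∈ W'}`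
is a `∇`-invariant `ℂ[[z]]`-submodule of `W`, the quotient `W/W̃'` is free, and the `K`-span
of `W̃' ⊗ 1` equals `W'`. -/
theorem statement10 (m : ℕ) (hm : 1 ≤ m)
    (W : Type*) [AddCommGroup W] [Module (PowerSeries ℂ) W]
    [Module.Finite (PowerSeries ℂ) W] [Module.Free (PowerSeries ℂ) W]
    (Dc : W →+ W) (hDc : IsFormalConnection m Dc)
    -- the formal derivative on `K = ℂ((z))`: the unique derivation extending `d/dz`
    (d : LaurentSeries ℂ →+ LaurentSeries ℂ)
    (hd : ∀ f g : LaurentSeries ℂ, d (f * g) = f * d g + g * d f)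
    (hdext : ∀ f : PowerSeries ℂ,
      d (algebraMap (PowerSeries ℂ) (LaurentSeries ℂ) f)
        = algebraMap (PowerSeries ℂ) (LaurentSeries ℂ) (PowerSeries.derivative ℂ f))
    -- `∇_K`, the unique (`ℂ`-linear) extension of `∇` to `W ⊗ K` satisfying Leibniz
    (DK : LaurentSeries ℂ ⊗[PowerSeries ℂ] W →+ LaurentSeries ℂ ⊗[PowerSeries ℂ] W)
    (hDKext : ∀ a : W,
      DK ((1 : LaurentSeries ℂ) ⊗ₜ a) = (1 : LaurentSeries ℂ) ⊗ₜ Dc a)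
    (hleib : ∀ (f : LaurentSeries ℂ) (x : LaurentSeries ℂ ⊗[PowerSeries ℂ] W),
      DK (f • x) =
        ((algebraMap (PowerSeries ℂ) (LaurentSeries ℂ) ((X : PowerSeries ℂ) ^ m)) * d f) • x
          + f • DK x)
    (W' : Submodule (LaurentSeries ℂ) (LaurentSeries ℂ ⊗[PowerSeries ℂ] W))
    (hW' : ∀ x ∈ W', DK x ∈ W') :
    (∀ a : W, ((1 : LaurentSeries ℂ) ⊗ₜ[PowerSeries ℂ] a) ∈ W' →
        ((1 : LaurentSeries ℂ) ⊗ₜ[PowerSeries ℂ] Dc a) ∈ W')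
    ∧ Module.Free (PowerSeries ℂ)
        (W ⧸ Submodule.comap
          (TensorProduct.mk (PowerSeries ℂ) (LaurentSeries ℂ) W 1)
          (W'.restrictScalars (PowerSeries ℂ)))
    ∧ Submodule.span (LaurentSeries ℂ)
        ((fun a : W => ((1 : LaurentSeries ℂ) ⊗ₜ[PowerSeries ℂ] a)) ''
          {a : W | ((1 : LaurentSeries ℂ) ⊗ₜ[PowerSeries ℂ] a) ∈ W'}) = W' := by
  classical
  -- denominator clearing
  have key : ∀ x : (LaurentSeries ℂ) ⊗[(PowerSeries ℂ)] W, ∃ s : nonZeroDivisors (PowerSeries ℂ), ∃ a : W,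
      (s : (PowerSeries ℂ)) • x = (1 : (LaurentSeries ℂ)) ⊗ₜ[(PowerSeries ℂ)] a := by
    intro x
    induction x using TensorProduct.induction_on with
    | zero => exact ⟨1, 0, by simp⟩
    | tmul f a =>
      obtain ⟨⟨p, s⟩, hps⟩ := IsLocalization.surj (nonZeroDivisors (PowerSeries ℂ)) f
      refine ⟨s, p • a, ?_⟩
      have h1 : (s : (PowerSeries ℂ)) • (f ⊗ₜ[(PowerSeries ℂ)] a) = (f * algebraMap (PowerSeries ℂ) (LaurentSeries ℂ) s) ⊗ₜ[(PowerSeries ℂ)] a := by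
        rw [smul_tmul', Algebra.smul_def, mul_comm]
      rw [h1, hps, tmul_smul, smul_tmul', Algebra.smul_def, mul_one]
    | add x y hx hy =>
      obtain ⟨s, a, ha⟩ := hx
      obtain ⟨t, b, hb⟩ := hy
      refine ⟨s * t, (t : (PowerSeries ℂ)) • a + (s : (PowerSeries ℂ)) • b, ?_⟩
      have h1 : ((s * t : nonZeroDivisors (PowerSeries ℂ)) : (PowerSeries ℂ)) • (x + y)
          = (t : (PowerSeries ℂ)) • ((s : (PowerSeries ℂ)) • x) + (s : (PowerSeries ℂ)) • ((t : (PowerSeries ℂ)) • y) := by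
        rw [Submonoid.coe_mul, smul_add, mul_smul, mul_smul,
          smul_comm ((s : PowerSeries ℂ)) ((t : PowerSeries ℂ)) x]
      rw [h1, ha, hb, tmul_add, tmul_smul, tmul_smul]
  have hmapne : ∀ s : nonZeroDivisors (PowerSeries ℂ), algebraMap (PowerSeries ℂ) (LaurentSeries ℂ) s ≠ 0 := fun s =>
    IsFractionRing.to_map_ne_zero_of_mem_nonZeroDivisors s.2
  have hsmul : ∀ (r : (PowerSeries ℂ)) (x : (LaurentSeries ℂ) ⊗[(PowerSeries ℂ)] W), r • x = (algebraMap (PowerSeries ℂ) (LaurentSeries ℂ) r) • x := by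
    intro r x; rw [algebraMap_smul]
  refine ⟨?_, ?_, ?_⟩
  · intro a ha
    have := hW' _ ha
    rwa [hDKext] at this
  · apply auxFree
    intro f a hf hfa
    have h1 : ((1 : LaurentSeries ℂ) ⊗ₜ[PowerSeries ℂ] (f • a) :
        (LaurentSeries ℂ) ⊗[PowerSeries ℂ] W) ∈ W' := hfa
    have h2 : ((1 : LaurentSeries ℂ) ⊗ₜ[PowerSeries ℂ] (f • a) :
          (LaurentSeries ℂ) ⊗[PowerSeries ℂ] W)
        = (algebraMap (PowerSeries ℂ) (LaurentSeries ℂ) f) •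
            ((1 : LaurentSeries ℂ) ⊗ₜ[PowerSeries ℂ] a) := by
      rw [tmul_smul, hsmul]
    rw [h2] at h1
    have hne : algebraMap (PowerSeries ℂ) (LaurentSeries ℂ) f ≠ 0 := fun h =>
      hf ((IsFractionRing.to_map_eq_zero_iff (K := LaurentSeries ℂ)).mp h)
    have h3 := W'.smul_mem (algebraMap (PowerSeries ℂ) (LaurentSeries ℂ) f)⁻¹ h1
    rwa [inv_smul_smul₀ hne] at h3
  · apply le_antisymm
    · rw [Submodule.span_le]
      rintro _ ⟨a, ha, rfl⟩
      exact ha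
    · intro x hx
      obtain ⟨s, a, ha⟩ := key x
      have hmem : ((1 : (LaurentSeries ℂ)) ⊗ₜ[(PowerSeries ℂ)] a : (LaurentSeries ℂ) ⊗[(PowerSeries ℂ)] W) ∈ W' := by
        rw [← ha, hsmul]
        exact W'.smul_mem _ hx
      have hx' : x = (algebraMap (PowerSeries ℂ) (LaurentSeries ℂ) s)⁻¹ • ((1 : (LaurentSeries ℂ)) ⊗ₜ[(PowerSeries ℂ)] a) := by
        rw [← ha, hsmul, inv_smul_smul₀ (hmapne s)]
      rw [hx']
      exact Submodule.smul_mem _ _ (Submodule.subset_span ⟨a, hmem, rfl⟩)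

end
end

section
/- Let m ≥ 1 and r ≥ 1, let (W,∇) be a formal connection with pole order m on a free ℂ[[z]]-module W of rank r, and let π : W ⊗_{ℂ[[z]]} ℂ[[w]] → ℂ[[w]] be a ℂ[[w]]-linear map with π∘D = ∇_{ν̃}∘π for some ν̃ ∈ ℂ[[w]], such that the map W → ℂ[[w]], a ↦ π(a⊗1), is bijective. For 0 ≤ k ≤ r−1 set W_k := {a ∈ W : π(a⊗1) ∈ w^k·ℂ[[w]]}. Then: (a) W_k is a ℂ[[z]]-submodule of W with ∇(W_k) ⊆ W_k, free of rank r over ℂ[[z]]; (b) for every x ∈ W_k ⊗_{ℂ[[z]]} ℂ[[w]], the element π(ι(x)) lies in w^k·ℂ[[w]], where ι : W_k ⊗ ℂ[[w]] → W ⊗ ℂ[[w]] is induced by the inclusion; (c) the map ρ_k : W_k ⊗_{ℂ[[z]]} ℂ[[w]] → ℂ[[w]] defined by ρ_k(x) = w^{−k}·π(ι(x)) is surjective and satisfies ρ_k∘D_k = ∇_{ν̃ + k·w^{N−1}}∘ρ_k, where D_k is the induced connection in the frame ω on W_k ⊗ ℂ[[w]] coming from ∇|_{W_k} (this expresses that π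 induces a quotient intertwining ∇|_{W_k} with ∇_{ν + k·dw/w}). -/
/-!
The map `a ↦ π(1 ⊗ a)` is a `ℂ[[z]]`-linear isomorphism `W ≃ ℂ[[w]]` carrying `W_k` onto the
ideal `(w^k)`, which multiplication by `w^k` identifies with `ℂ[[w]]`; so `W_k` is free of rank
`r`. Evaluating the compatibility of `π` on `1 ⊗ a` gives `r · π(1 ⊗ ∇a) = ∇_ν̃ π(1 ⊗ a)`.
Since `r` is a unit and `∇_ν̃ (w^k u) = w^k ∇_{ν̃ + k w^{N-1}} u`, the ideal `(w^k)` is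
`∇_ν̃`-stable, which makes `W_k` invariant, and dividing the compatibility by `w^k` gives
the twisted intertwining for `ρ_k`.
-/

open PowerSeries TensorProduct

noncomputable section

namespace PowerSeries

variable {R : Type*} [CommRing R]

/-- The connection `∇_ν = d + ν·ω` on `R⟦X⟧`, in the frame `ω = dX/X^N`. -/
def twistedDeriv (N : ℕ) (ν f : R⟦X⟧) : R⟦X⟧ := X ^ N * derivative R f + ν * f

/-- Conjugating by `X^k` twists the connection by `k·dX/X = k·X^n·ω` (here `N = n + 1`). -/
theorem twistedDeriv_X_pow_mul (n k : ℕ) (ν u : R⟦X⟧) :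
    twistedDeriv (n + 1) ν (X ^ k * u) = X ^ k * twistedDeriv (n + 1) (ν + k • X ^ n) u := by
  rcases k with _ | k
  · simp [twistedDeriv]
  · simp only [twistedDeriv, Derivation.leibniz, Derivation.leibniz_pow, derivative_X,
      smul_eq_mul, nsmul_eq_mul, Nat.add_sub_cancel]
    ring

end PowerSeries

section BaseChange

variable {A B M : Type*} [CommRing A] [CommRing B] [Algebra A B] [AddCommGroup M] [Module A M]

theorem lTensor_subtype_mem_of_one_tmul_mem (π : B ⊗[A] M →ₗ[B] B) {P : Submodule A M}
    {I : Ideal B} (hP : ∀ a ∈ P, π (1 ⊗ₜ a) ∈ I) (x : B ⊗[A] P) :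
    π (P.subtype.lTensor B x) ∈ I := by
  induction x using TensorProduct.induction_on with
  | zero => simp
  | tmul g a =>
    rw [LinearMap.lTensor_tmul, ← mul_one g, ← smul_eq_mul, ← smul_tmul', map_smul]
    exact I.mul_mem_left g (hP a a.2)
  | add x y hx hy => simpa only [map_add] using I.add_mem hx hy

theorem lTensor_comp_connection {P : Type*} [AddCommGroup P] [Module A P] (f : P →ₗ[A] M)
    (c : ℕ) (δ : B → B) {Dc : M →+ M} {Dc' : P →+ P} (hf : ∀ a, f (Dc' a) = Dc (f a))
    {D : B ⊗[A] M →+ B ⊗[A] M} (hD : ∀ g a, D (g ⊗ₜ a) = c • (g ⊗ₜ Dc a) + δ g ⊗ₜ a)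
    {D' : B ⊗[A] P →+ B ⊗[A] P} (hD' : ∀ g a, D' (g ⊗ₜ a) = c • (g ⊗ₜ Dc' a) + δ g ⊗ₜ a)
    (x : B ⊗[A] P) : f.lTensor B (D' x) = D (f.lTensor B x) := by
  induction x using TensorProduct.induction_on with
  | zero => simp
  | tmul g a => simp [hD, hD', hf]
  | add x y hx hy => simp only [map_add, hx, hy]

def oneTmulRestrict (π : B ⊗[A] M →ₗ[B] B) : M →ₗ[A] B :=
  π.restrictScalars A ∘ₗ TensorProduct.mk A B M 1

def comapSpanSingletonEquiv [IsDomain B] (e : M ≃ₗ[A] B) {t : B} (ht : t ≠ 0) :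
    ((Ideal.span {t}).restrictScalars A).comap (e : M →ₗ[A] B) ≃ₗ[A] M :=
  e.ofSubmodule' _ ≪≫ₗ
    ((LinearEquiv.toSpanNonzeroSingleton B B t ht).symm.restrictScalars A) ≪≫ₗ e.symm

end BaseChange

instance (r : ℕ) : IsDomain (Cw r) := inferInstanceAs (IsDomain ℂ⟦X⟧)

theorem Cw.w_pow_ne_zero (r k : ℕ) : Cw.w r ^ k ≠ 0 := pow_ne_zero k X_ne_zero

theorem Cw.isUnit_natCast {r : ℕ} (hr : r ≠ 0) : IsUnit (r : Cw r) := by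
  have h := (Nat.cast_ne_zero.2 hr : (r : ℂ) ≠ 0).isUnit.map (C : ℂ →+* ℂ⟦X⟧)
  rwa [map_natCast] at h

section FormalConnection

variable {r n : ℕ} {W : Type*} [AddCommGroup W] [Module ℂ⟦X⟧ W]
  {Dc : W →+ W} {D : Cw r ⊗[ℂ⟦X⟧] W →+ Cw r ⊗[ℂ⟦X⟧] W} {π : Cw r ⊗[ℂ⟦X⟧] W →ₗ[Cw r] Cw r}
  {ν : Cw r}

theorem natCast_mul_oneTmulRestrict_connection
    (hD : ∀ g a, D (g ⊗ₜ a) = r • (g ⊗ₜ Dc a) + (Cw.w r ^ n * Cw.deriv g) ⊗ₜ a)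
    (hcompat : ∀ x, π (D x) = Cw.w r ^ n * Cw.deriv (π x) + ν * π x) (a : W) :
    (r : Cw r) * oneTmulRestrict π (Dc a) = twistedDeriv n ν (oneTmulRestrict π a) := by
  have hder : Cw.deriv (1 : Cw r) = 0 := (derivative ℂ).map_one_eq_zero
  have h := hcompat (1 ⊗ₜ a)
  simp only [hD, hder, mul_zero, zero_tmul, add_zero, map_nsmul, nsmul_eq_mul] at h
  exact h

theorem oneTmulRestrict_connection_mem_span (hr : r ≠ 0)
    (hD : ∀ g a, D (g ⊗ₜ a) = r • (g ⊗ₜ Dc a) + (Cw.w r ^ (n + 1) * Cw.deriv g) ⊗ₜ a)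
    (hcompat : ∀ x, π (D x) = Cw.w r ^ (n + 1) * Cw.deriv (π x) + ν * π x) {k : ℕ} {a : W}
    (ha : oneTmulRestrict π a ∈ Ideal.span {Cw.w r ^ k}) :
    oneTmulRestrict π (Dc a) ∈ Ideal.span {Cw.w r ^ k} := by
  obtain ⟨u, hu⟩ := Ideal.mem_span_singleton'.1 ha
  rw [← Ideal.unit_mul_mem_iff_mem _ (Cw.isUnit_natCast hr),
    natCast_mul_oneTmulRestrict_connection hD hcompat, ← hu, mul_comm]
  exact Ideal.mem_span_singleton'.2
    ⟨_, (mul_comm _ _).trans (twistedDeriv_X_pow_mul _ _ _ _).symm⟩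

end FormalConnection

theorem statement11_general (m r : ℕ) (hr : 1 ≤ r)
    (W : Type*) [AddCommGroup W] [Module (PowerSeries ℂ) W]
    [Module.Finite (PowerSeries ℂ) W] [Module.Free (PowerSeries ℂ) W]
    (hrank : Module.finrank (PowerSeries ℂ) W = r)
    (Dc : W →+ W)
    (D : Cw r ⊗[PowerSeries ℂ] W →+ Cw r ⊗[PowerSeries ℂ] W)
    (hD : ∀ (g : Cw r) (a : W),
      D (g ⊗ₜ a) = r • ((g ⊗ₜ[PowerSeries ℂ] Dc a))
        + (Cw.w r ^ (m * r - r + 1) * Cw.deriv g) ⊗ₜ a)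
    (π : Cw r ⊗[PowerSeries ℂ] W →ₗ[Cw r] Cw r)
    (ν : Cw r)
    (hcompat : ∀ x, π (D x) =
      Cw.w r ^ (m * r - r + 1) * Cw.deriv (π x) + ν * π x)
    (hbij : Function.Bijective (fun a : W => π ((1 : Cw r) ⊗ₜ a))) :
    ∀ k : ℕ, k ≤ r - 1 →
    ∃ Wk : Submodule (PowerSeries ℂ) W,
      -- `Wk = {a ∈ W : π(a ⊗ 1) ∈ w^k ℂ[[w]]}`
      (∀ a : W, a ∈ Wk ↔ π ((1 : Cw r) ⊗ₜ a) ∈ Ideal.span {Cw.w r ^ k}) ∧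
      -- (a) `Wk` is `∇`-invariant and free of rank `r`
      (∀ a ∈ Wk, Dc a ∈ Wk) ∧
      Module.Finite (PowerSeries ℂ) ↥Wk ∧ Module.Free (PowerSeries ℂ) ↥Wk ∧
      Module.finrank (PowerSeries ℂ) ↥Wk = r ∧
      -- (b) `π` maps `Wk ⊗ ℂ[[w]]` into `w^k ℂ[[w]]`
      (∀ x : Cw r ⊗[PowerSeries ℂ] ↥Wk,
        π (LinearMap.lTensor (Cw r) Wk.subtype x) ∈ Ideal.span {Cw.w r ^ k}) ∧
      -- (c) `ρ = w^{−k} π` is surjective and intertwines `∇|_{Wk}` with `∇_{ν̃ + k w^{N−1} ω}`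
      ∃ ρ : Cw r ⊗[PowerSeries ℂ] ↥Wk → Cw r,
        (∀ x, Cw.w r ^ k * ρ x = π (LinearMap.lTensor (Cw r) Wk.subtype x)) ∧
        Function.Surjective ρ ∧
        ∀ Dck : ↥Wk →+ ↥Wk, (∀ a : ↥Wk, (Dck a : W) = Dc (a : W)) →
        ∀ Dk : Cw r ⊗[PowerSeries ℂ] ↥Wk →+ Cw r ⊗[PowerSeries ℂ] ↥Wk,
          (∀ (g : Cw r) (a : ↥Wk),
            Dk (g ⊗ₜ a) = r • (g ⊗ₜ[PowerSeries ℂ] Dck a)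
              + (Cw.w r ^ (m * r - r + 1) * Cw.deriv g) ⊗ₜ a) →
          ∀ x, ρ (Dk x) = Cw.w r ^ (m * r - r + 1) * Cw.deriv (ρ x)
            + (ν + (k : ℕ) • Cw.w r ^ (m * r - r)) * ρ x := by
  intro k _
  have hwk := Cw.w_pow_ne_zero r k
  let e := LinearEquiv.ofBijective (oneTmulRestrict π) hbij
  let Wk := ((Ideal.span {Cw.w r ^ k}).restrictScalars ℂ⟦X⟧).comap (e : W →ₗ[ℂ⟦X⟧] Cw r)
  have hb := lTensor_subtype_mem_of_one_tmul_mem π (P := Wk)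
    (I := Ideal.span {Cw.w r ^ k}) fun _ h => h
  choose ρ hρ using fun x => Ideal.mem_span_singleton'.1 (hb x)
  replace hρ : ∀ x, Cw.w r ^ k * ρ x = π (Wk.subtype.lTensor (Cw r) x) :=
    fun x => (mul_comm _ _).trans (hρ x)
  have hWkW := comapSpanSingletonEquiv e hwk
  refine ⟨Wk, fun _ => Iff.rfl, fun _ => oneTmulRestrict_connection_mem_span (by omega) hD hcompat,
    .equiv hWkW.symm, .of_equiv hWkW.symm, hWkW.finrank_eq.trans hrank, hb, ρ, hρ, ?_, ?_⟩
  · intro g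
    obtain ⟨a, ha⟩ := hbij.2 (Cw.w r ^ k * g)
    have haWk : a ∈ Wk := Ideal.mem_span_singleton'.2 ⟨g, (mul_comm _ _).trans ha.symm⟩
    refine ⟨1 ⊗ₜ ⟨a, haWk⟩, mul_left_cancel₀ hwk ?_⟩
    rw [hρ, LinearMap.lTensor_tmul]
    exact ha
  · intro Dck hDck Dk hDk x
    apply mul_left_cancel₀ hwk
    rw [hρ, lTensor_comp_connection _ _ _ hDck hD hDk, hcompat, ← hρ]
    exact twistedDeriv_X_pow_mul _ _ _ _

/-- Let `(W,∇)` be a formal connection with pole order `m ≥ 1` on a free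
`ℂ[[z]]`-module of rank `r ≥ 1`, and `π : W ⊗ ℂ[[w]] → ℂ[[w]]` a `ℂ[[w]]`-linear map
intertwining the induced connection with `∇_ν̃` whose restriction to `W` is bijective.
For `0 ≤ k ≤ r−1`, `W_k = {a ∈ W : π(a ⊗ 1) ∈ (w^k)}` is a `∇`-invariant submodule, free of
rank `r`; `π` maps `W_k ⊗ ℂ[[w]]` into `(w^k)`, and `w^{−k}·π` is a surjection
`W_k ⊗ ℂ[[w]] → ℂ[[w]]` intertwining `∇|_{W_k}` with `∇_{ν̃ + k·dw/w}`. -/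
theorem statement11 (m r : ℕ) (hm : 1 ≤ m) (hr : 1 ≤ r)
    (W : Type*) [AddCommGroup W] [Module (PowerSeries ℂ) W]
    [Module.Finite (PowerSeries ℂ) W] [Module.Free (PowerSeries ℂ) W]
    (hrank : Module.finrank (PowerSeries ℂ) W = r)
    (Dc : W →+ W) (hDc : IsFormalConnection m Dc)
    (D : Cw r ⊗[PowerSeries ℂ] W →+ Cw r ⊗[PowerSeries ℂ] W)
    (hD : ∀ (g : Cw r) (a : W),
      D (g ⊗ₜ a) = r • ((g ⊗ₜ[PowerSeries ℂ] Dc a))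
        + (Cw.w r ^ (m * r - r + 1) * Cw.deriv g) ⊗ₜ a)
    (π : Cw r ⊗[PowerSeries ℂ] W →ₗ[Cw r] Cw r)
    (ν : Cw r)
    (hcompat : ∀ x, π (D x) =
      Cw.w r ^ (m * r - r + 1) * Cw.deriv (π x) + ν * π x)
    (hbij : Function.Bijective (fun a : W => π ((1 : Cw r) ⊗ₜ a))) :
    ∀ k : ℕ, k ≤ r - 1 →
    ∃ Wk : Submodule (PowerSeries ℂ) W,
      -- `Wk = {a ∈ W : π(a ⊗ 1) ∈ w^k ℂ[[w]]}`
      (∀ a : W, a ∈ Wk ↔ π ((1 : Cw r) ⊗ₜ a) ∈ Ideal.span {Cw.w r ^ k}) ∧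
      -- (a) `Wk` is `∇`-invariant and free of rank `r`
      (∀ a ∈ Wk, Dc a ∈ Wk) ∧
      Module.Finite (PowerSeries ℂ) ↥Wk ∧ Module.Free (PowerSeries ℂ) ↥Wk ∧
      Module.finrank (PowerSeries ℂ) ↥Wk = r ∧
      -- (b) `π` maps `Wk ⊗ ℂ[[w]]` into `w^k ℂ[[w]]`
      (∀ x : Cw r ⊗[PowerSeries ℂ] ↥Wk,
        π (LinearMap.lTensor (Cw r) Wk.subtype x) ∈ Ideal.span {Cw.w r ^ k}) ∧
      -- (c) `ρ = w^{−k} π` is surjective and intertwines `∇|_{Wk}` with `∇_{ν̃ + k w^{N−1} ω}`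
      ∃ ρ : Cw r ⊗[PowerSeries ℂ] ↥Wk → Cw r,
        (∀ x, Cw.w r ^ k * ρ x = π (LinearMap.lTensor (Cw r) Wk.subtype x)) ∧
        Function.Surjective ρ ∧
        ∀ Dck : ↥Wk →+ ↥Wk, (∀ a : ↥Wk, (Dck a : W) = Dc (a : W)) →
        ∀ Dk : Cw r ⊗[PowerSeries ℂ] ↥Wk →+ Cw r ⊗[PowerSeries ℂ] ↥Wk,
          (∀ (g : Cw r) (a : ↥Wk),
            Dk (g ⊗ₜ a) = r • (g ⊗ₜ[PowerSeries ℂ] Dck a)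
              + (Cw.w r ^ (m * r - r + 1) * Cw.deriv g) ⊗ₜ a) →
          ∀ x, ρ (Dk x) = Cw.w r ^ (m * r - r + 1) * Cw.deriv (ρ x)
            + (ν + (k : ℕ) • Cw.w r ^ (m * r - r)) * ρ x :=
  statement11_general m r hr W hrank Dc D hD π ν hcompat hbij

end
end
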